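/- arXiv:1609.01564 — 4 statements merged into one kernel-verified Lean document; each statement's English description precedes it below -/
import Mathlib

section
/- For every integer d ≥ 2 there exist an integer k_0 ≥ 1 and a constant C, depending only on d and ρ, such that whenever j, k are integers with 1 ≤ j < k − k_0, for every x ∈ ℝ: |(ψ̃_j * ψ_k)(x)| ≤ C 2^{−2k} 1_{[−2^{k+1}, 2^{k+1})}(x). -/
open MeasureTheory Set

/-- The hypotheses on the bump function `ρ`: an odd smooth (Schwartz, being compactly
supported) function, supported in `{1/2 ≤ |t| ≤ 2}`, resolving the singularity `1/t`. -/
def rhoGood (ρ : ℝ → ℝ) : Prop :=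
  ContDiff ℝ (⊤ : ℕ∞) ρ ∧ (∀ t, ρ (-t) = - ρ t) ∧
  (∀ t, ρ t ≠ 0 → 1 / 2 ≤ |t| ∧ |t| ≤ 2) ∧
  ∀ t : ℝ, t ≠ 0 → (∑' i : ℤ, (2:ℝ) ^ (-i) * ρ ((2:ℝ) ^ (-i) * t)) = 1 / t

/-- `ψ_k(y) = e^{2πi y^d} ρ_k^+(y)` where `ρ_k^+(t) = 2^{-k} ρ(2^{-k} t) 1_{t>0}`. -/
noncomputable def psiK (d : ℕ) (ρ : ℝ → ℝ) (k : ℤ) (y : ℝ) : ℂ :=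
  (((2:ℝ) ^ (-k) * ρ ((2:ℝ) ^ (-k) * y) : ℝ) : ℂ) *
    (if 0 < y then Complex.exp (2 * Real.pi * Complex.I * (y : ℂ) ^ d) else 0)

/-! ### Auxiliary definitions for the proof of `stmt5`. -/

/-- The smooth positive part `ρ⁺` of `ρ` (smooth since `ρ` vanishes near `0`). -/
noncomputable def rhoP (ρ : ℝ → ℝ) : ℝ → ℝ := fun t => if 0 < t then ρ t else 0

lemma rhoP_ne_zero {ρ : ℝ → ℝ} (hρ : rhoGood ρ) {t : ℝ} (h : rhoP ρ t ≠ 0) :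
    1/2 ≤ t ∧ t ≤ 2 := by
  unfold rhoP at h
  by_cases ht : 0 < t
  · rw [if_pos ht] at h
    obtain ⟨h1, h2⟩ := hρ.2.2.1 t h
    rw [abs_of_pos ht] at h1 h2
    exact ⟨h1, h2⟩
  · rw [if_neg ht] at h; exact absurd rfl h

lemma rhoP_smooth {ρ : ℝ → ℝ} (hρ : rhoGood ρ) : ContDiff ℝ (⊤ : ℕ∞) (rhoP ρ) := by
  rw [contDiff_iff_contDiffAt]
  intro t
  rcases lt_or_ge t (1/2) with ht | ht
  · have hev : rhoP ρ =ᶠ[nhds t] (fun _ => (0:ℝ)) := by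
      filter_upwards [Iio_mem_nhds ht] with s hs
      unfold rhoP
      split_ifs with h0
      · by_contra hne
        have h1 := (hρ.2.2.1 s hne).1
        rw [abs_of_pos h0] at h1
        exact absurd hs (not_lt.2 h1)
      · rfl
    exact (contDiffAt_const (c := (0:ℝ))).congr_of_eventuallyEq hev
  · have h0t : (0:ℝ) < t := lt_of_lt_of_le (by norm_num) ht
    have hev : rhoP ρ =ᶠ[nhds t] ρ := by
      filter_upwards [Ioi_mem_nhds h0t] with s hs
      exact if_pos hs
    exact (hρ.1.contDiffAt).congr_of_eventuallyEq hev

lemma rhoP_bound {ρ : ℝ → ℝ} (hρ : rhoGood ρ) :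
    ∃ M : ℝ, 1 ≤ M ∧ ∀ t, |rhoP ρ t| ≤ M ∧ |deriv (rhoP ρ) t| ≤ M := by
  have hsupp : HasCompactSupport (rhoP ρ) := by
    apply HasCompactSupport.intro (isCompact_Icc (a := (-2:ℝ)) (b := 2))
    intro t ht
    by_contra hne
    obtain ⟨h1, h2⟩ := rhoP_ne_zero hρ hne
    exact ht ⟨by linarith, h2⟩
  have hc : Continuous (rhoP ρ) := (rhoP_smooth hρ).continuous
  have hcd : Continuous (deriv (rhoP ρ)) := (rhoP_smooth hρ).continuous_deriv (by simp)
  obtain ⟨M1, hM1⟩ := hsupp.exists_bound_of_continuous hc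
  obtain ⟨M2, hM2⟩ := hsupp.deriv.exists_bound_of_continuous hcd
  refine ⟨max 1 (max M1 M2), le_max_left _ _, fun t => ⟨?_, ?_⟩⟩
  · exact le_trans (by simpa using hM1 t) (le_trans (le_max_left _ _) (le_max_right _ _))
  · exact le_trans (by simpa using hM2 t) (le_trans (le_max_right _ _) (le_max_right _ _))

lemma scale_bounds {y : ℝ} {m : ℤ} (h1 : 1/2 ≤ (2:ℝ)^(-m) * y) (h2 : (2:ℝ)^(-m)*y ≤ 2) :
    (2:ℝ)^(m-1) ≤ y ∧ y ≤ (2:ℝ)^(m+1) := by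
  have hp : (0:ℝ) < (2:ℝ)^m := zpow_pos two_pos m
  have hid : (2:ℝ)^m * ((2:ℝ)^(-m)*y) = y := by
    rw [← mul_assoc, ← zpow_add₀ (two_ne_zero : (2:ℝ) ≠ 0), add_neg_cancel, zpow_zero, one_mul]
  constructor
  · have h := mul_le_mul_of_nonneg_left h1 hp.le
    rw [hid] at h
    calc (2:ℝ)^(m-1) = (2:ℝ)^m * (1/2) := by
          rw [zpow_sub_one₀ (two_ne_zero : (2:ℝ) ≠ 0)]; ring
      _ ≤ y := h
  · have h := mul_le_mul_of_nonneg_left h2 hp.le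
    rw [hid] at h
    calc y ≤ (2:ℝ)^m * 2 := h
      _ = (2:ℝ)^(m+1) := (zpow_add_one₀ (two_ne_zero : (2:ℝ) ≠ 0) m).symm

/-- The amplitude `2^{-j}ρ⁺(2^{-j}y) · 2^{-k}ρ⁺(2^{-k}(x+y))`. -/
noncomputable def ampl (ρ : ℝ → ℝ) (j k : ℤ) (x : ℝ) : ℝ → ℝ := fun y =>
  ((2:ℝ)^(-j) * rhoP ρ ((2:ℝ)^(-j)*y)) * ((2:ℝ)^(-k) * rhoP ρ ((2:ℝ)^(-k)*(x+y)))

/-- The derivative of the amplitude. -/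
noncomputable def ampl' (ρ : ℝ → ℝ) (j k : ℤ) (x : ℝ) : ℝ → ℝ := fun y =>
  (((2:ℝ)^(-j)*(2:ℝ)^(-j)) * deriv (rhoP ρ) ((2:ℝ)^(-j)*y)) *
      ((2:ℝ)^(-k) * rhoP ρ ((2:ℝ)^(-k)*(x+y))) +
    ((2:ℝ)^(-j) * rhoP ρ ((2:ℝ)^(-j)*y)) *
      (((2:ℝ)^(-k)*(2:ℝ)^(-k)) * deriv (rhoP ρ) ((2:ℝ)^(-k)*(x+y)))

/-- The oscillating factor `e^{2πi((x+y)^d - y^d)}`. -/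
noncomputable def phE (d : ℕ) (x : ℝ) : ℝ → ℂ := fun y =>
  Complex.exp (2*(Real.pi:ℂ)*Complex.I*(((x:ℂ)+y)^d - (y:ℂ)^d))

/-- The derivative of the phase `(x+y)^d - y^d`. -/
noncomputable def pder (d : ℕ) (x : ℝ) : ℝ → ℝ := fun y =>
  (d:ℝ) * ((x+y)^(d-1) - y^(d-1))

/-- The second derivative of the phase. -/
noncomputable def pder2 (d : ℕ) (x : ℝ) : ℝ → ℝ := fun y =>
  (d:ℝ) * (((d:ℝ)-1) * ((x+y)^(d-2) - y^(d-2)))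

noncomputable def gq (d : ℕ) (ρ : ℝ → ℝ) (j k : ℤ) (x : ℝ) : ℝ → ℂ := fun y =>
  ((ampl ρ j k x y : ℝ):ℂ) / (2*(Real.pi:ℂ)*Complex.I*((pder d x y : ℝ):ℂ))

noncomputable def gq' (d : ℕ) (ρ : ℝ → ℝ) (j k : ℤ) (x : ℝ) : ℝ → ℂ := fun y =>
  (((ampl' ρ j k x y : ℝ):ℂ) * (2*(Real.pi:ℂ)*Complex.I*((pder d x y : ℝ):ℂ)) -
      ((ampl ρ j k x y : ℝ):ℂ) * (2*(Real.pi:ℂ)*Complex.I*((pder2 d x y : ℝ):ℂ))) /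
    (2*(Real.pi:ℂ)*Complex.I*((pder d x y : ℝ):ℂ))^2

lemma ampl_hasDerivAt {ρ : ℝ → ℝ} (hρ : rhoGood ρ) (j k : ℤ) (x y : ℝ) :
    HasDerivAt (ampl ρ j k x) (ampl' ρ j k x y) y := by
  have hrpd : ∀ t : ℝ, HasDerivAt (rhoP ρ) (deriv (rhoP ρ) t) t := fun t =>
    (((rhoP_smooth hρ).differentiable (by simp)) t).hasDerivAt
  have h1 : HasDerivAt (fun y : ℝ => (2:ℝ)^(-j) * rhoP ρ ((2:ℝ)^(-j)*y))
      ((2:ℝ)^(-j) * (deriv (rhoP ρ) ((2:ℝ)^(-j)*y) * (2:ℝ)^(-j))) y := by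
    have hin : HasDerivAt (fun y : ℝ => (2:ℝ)^(-j)*y) ((2:ℝ)^(-j)) y := by
      simpa using (hasDerivAt_id y).const_mul ((2:ℝ)^(-j))
    exact ((hrpd _).comp y hin).const_mul _
  have h2 : HasDerivAt (fun y : ℝ => (2:ℝ)^(-k) * rhoP ρ ((2:ℝ)^(-k)*(x+y)))
      ((2:ℝ)^(-k) * (deriv (rhoP ρ) ((2:ℝ)^(-k)*(x+y)) * (2:ℝ)^(-k))) y := by
    have hin : HasDerivAt (fun y : ℝ => (2:ℝ)^(-k)*(x+y)) ((2:ℝ)^(-k)) y := by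
      simpa using ((hasDerivAt_id y).const_add x).const_mul ((2:ℝ)^(-k))
    exact ((hrpd _).comp y hin).const_mul _
  have h := h1.mul h2
  refine h.congr_deriv ?_
  unfold ampl'
  ring

lemma pder_hasDerivAt (d : ℕ) (hd : 1 ≤ d) (x y : ℝ) :
    HasDerivAt (pder d x) (pder2 d x y) y := by
  unfold pder pder2
  have h1 : HasDerivAt (fun y : ℝ => (x+y)^(d-1)) (((d-1 : ℕ):ℝ) * (x+y)^(d-2)) y := by
    have h := (hasDerivAt_pow (d-1) (x+y)).comp y ((hasDerivAt_id y).const_add x)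
    simpa [Function.comp_def, show d-1-1 = d-2 by omega] using h
  have h2 : HasDerivAt (fun y : ℝ => y^(d-1)) (((d-1:ℕ):ℝ) * y^(d-2)) y := by
    simpa [show d-1-1 = d-2 by omega] using hasDerivAt_pow (d-1) y
  have h := (h1.sub h2).const_mul (d:ℝ)
  refine h.congr_deriv ?_
  push_cast [Nat.cast_sub hd]
  ring

lemma phE_hasDerivAt (d : ℕ) (x y : ℝ) :
    HasDerivAt (phE d x) (2*(Real.pi:ℂ)*Complex.I*((pder d x y : ℝ):ℂ) * phE d x y) y := by
  unfold phE pder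
  have hp1 : HasDerivAt (fun z : ℂ => ((x:ℂ)+z)^d) ((d:ℂ)*((x:ℂ)+(y:ℂ))^(d-1)) (y:ℂ) := by
    have h := (hasDerivAt_pow d ((x:ℂ)+(y:ℂ))).comp (y:ℂ) ((hasDerivAt_id (y:ℂ)).const_add (x:ℂ))
    simpa [Function.comp_def] using h
  have hp2 := hasDerivAt_pow d (y:ℂ)
  have h := (((hp1.sub hp2).const_mul (2*(Real.pi:ℂ)*Complex.I)).cexp).comp_ofReal
  refine h.congr_deriv ?_
  push_cast [Pi.sub_apply]
  ring

lemma norm_phE (d : ℕ) (x y : ℝ) : ‖phE d x y‖ = 1 := by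
  unfold phE
  rw [show 2*(Real.pi:ℂ)*Complex.I*(((x:ℂ)+y)^d - (y:ℂ)^d)
      = ((2*Real.pi*((x+y)^d - y^d) : ℝ):ℂ) * Complex.I by push_cast; ring]
  exact Complex.norm_exp_ofReal_mul_I _

lemma gq_hasDerivAt {ρ : ℝ → ℝ} (hρ : rhoGood ρ) {d : ℕ} (hd : 1 ≤ d) (j k : ℤ) {x y : ℝ}
    (hp : pder d x y ≠ 0) : HasDerivAt (gq d ρ j k x) (gq' d ρ j k x y) y := by
  have hne : (2*(Real.pi:ℂ)*Complex.I*((pder d x y:ℝ):ℂ)) ≠ 0 :=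
    mul_ne_zero (mul_ne_zero (mul_ne_zero two_ne_zero
      (Complex.ofReal_ne_zero.2 Real.pi_ne_zero)) Complex.I_ne_zero)
      (Complex.ofReal_ne_zero.2 hp)
  have h1 := (ampl_hasDerivAt hρ j k x y).ofReal_comp
  have h2 := ((pder_hasDerivAt d hd x y).ofReal_comp).const_mul (2*(Real.pi:ℂ)*Complex.I)
  exact h1.div h2 hne

lemma prod_bound {c1 c2 r1 r2 M : ℝ} (h1 : 0 < c1) (h2 : 0 < c2)
    (hr1 : |r1| ≤ M) (hr2 : |r2| ≤ M) (hM : 0 ≤ M) :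
    |(c1*r1)*(c2*r2)| ≤ c1*c2*M^2 := by
  rw [abs_mul, abs_mul, abs_mul, abs_of_pos h1, abs_of_pos h2]
  calc c1 * |r1| * (c2 * |r2|) ≤ c1*M*(c2*M) :=
        mul_le_mul (mul_le_mul_of_nonneg_left hr1 h1.le)
          (mul_le_mul_of_nonneg_left hr2 h2.le)
          (mul_nonneg h2.le (abs_nonneg _)) (mul_nonneg h1.le hM)
    _ = c1*c2*M^2 := by ring

set_option maxHeartbeats 2000000

/-- the `TT^*` estimate at separated scales `1 ≤ j < k - k₀`:
`|(ψ̃_j * ψ_k)(x)| ≤ C 2^{-2k} 1_{[-2^{k+1},2^{k+1})}(x)`,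
where `φ̃(y) = conj φ(-y)`, so that `(ψ̃_j * ψ_k)(x) = ∫ conj(ψ_j(y)) ψ_k(x+y) dy`. -/
theorem stmt5 (d : ℕ) (hd : 2 ≤ d) (ρ : ℝ → ℝ) (hρ : rhoGood ρ) :
    ∃ k0 : ℤ, 1 ≤ k0 ∧ ∃ C : ℝ, 0 < C ∧
      ∀ j k : ℤ, 1 ≤ j → j < k - k0 → ∀ x : ℝ,
        ‖∫ y : ℝ, (starRingEnd ℂ) (psiK d ρ j y) * psiK d ρ k (x + y)‖ ≤
          C * (2:ℝ) ^ (-(2*k)) *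
            Set.indicator (Set.Ico (-((2:ℝ) ^ (k+1))) ((2:ℝ) ^ (k+1)))
              (fun _ => (1:ℝ)) x := by
  obtain ⟨M, hM1, hM⟩ := rhoP_bound hρ
  have hM0 : (0:ℝ) ≤ M := le_trans zero_le_one hM1
  have hMpos : (0:ℝ) < M := lt_of_lt_of_le one_pos hM1
  have hd2 : (2:ℝ) ≤ (d:ℝ) := by exact_mod_cast hd
  have hd1 : 1 ≤ d := le_trans one_le_two hd
  have hdpos : (0:ℝ) < (d:ℝ) := by linarith
  have hC0 : (0:ℝ) < 100 * M^2 * (d:ℝ)^2 :=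
    mul_pos (mul_pos (by norm_num) (pow_pos hMpos 2)) (pow_pos hdpos 2)
  refine ⟨4, by norm_num, 100 * M^2 * (d:ℝ)^2, hC0, ?_⟩
  intro j k hj hjk x
  have hjk5 : j + 5 ≤ k := by omega
  have hk : (6:ℤ) ≤ k := by omega
  have two_ne : (2:ℝ) ≠ 0 := two_ne_zero
  have hpos : ∀ m : ℤ, (0:ℝ) < (2:ℝ)^m := fun m => zpow_pos two_pos m
  have hmono : ∀ {m n : ℤ}, m ≤ n → (2:ℝ)^m ≤ (2:ℝ)^n :=
    fun h => zpow_le_zpow_right₀ one_le_two h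
  have hrhs0 : (0:ℝ) ≤ 100 * M^2 * (d:ℝ)^2 * (2:ℝ) ^ (-(2*k)) *
      Set.indicator (Set.Ico (-((2:ℝ) ^ (k+1))) ((2:ℝ) ^ (k+1))) (fun _ => (1:ℝ)) x :=
    mul_nonneg (mul_nonneg hC0.le (hpos _).le)
      (Set.indicator_nonneg (fun _ _ => zero_le_one) x)
  -- rewrite the integrand
  have hpsi : ∀ y : ℝ, (starRingEnd ℂ) (psiK d ρ j y) * psiK d ρ k (x + y)
      = ((ampl ρ j k x y : ℝ):ℂ) * phE d x y := by
    intro y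
    by_cases h1 : 0 < y
    · by_cases h2 : 0 < x + y
      · have e1 : rhoP ρ ((2:ℝ)^(-j)*y) = ρ ((2:ℝ)^(-j)*y) :=
          if_pos (mul_pos (hpos (-j)) h1)
        have e2 : rhoP ρ ((2:ℝ)^(-k)*(x+y)) = ρ ((2:ℝ)^(-k)*(x+y)) :=
          if_pos (mul_pos (hpos (-k)) h2)
        unfold ampl phE
        rw [e1, e2]
        simp only [psiK, if_pos h1, if_pos h2, map_mul, Complex.conj_ofReal, ← Complex.exp_conj,
          map_pow, map_ofNat, Complex.conj_I]
        rw [mul_mul_mul_comm, ← Complex.exp_add]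
        push_cast
        ring_nf
      · have e2 : rhoP ρ ((2:ℝ)^(-k)*(x+y)) = 0 := by
          unfold rhoP
          rw [if_neg]
          intro hc
          rcases mul_pos_iff.mp hc with ⟨_, hy⟩ | ⟨hneg, _⟩
          · exact h2 hy
          · exact absurd (hpos (-k)) (not_lt.2 hneg.le)
        have hz : ampl ρ j k x y = 0 := by unfold ampl; rw [e2]; ring
        rw [hz]
        simp [psiK, if_neg h2]
    · have e1 : rhoP ρ ((2:ℝ)^(-j)*y) = 0 := by
        unfold rhoP
        rw [if_neg]
        intro hc
        rcases mul_pos_iff.mp hc with ⟨_, hy⟩ | ⟨hneg, _⟩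
        · exact h1 hy
        · exact absurd (hpos (-j)) (not_lt.2 hneg.le)
      have hz : ampl ρ j k x y = 0 := by unfold ampl; rw [e1]; ring
      rw [hz]
      simp [psiK, if_neg h1]
  rw [show (∫ y : ℝ, (starRingEnd ℂ) (psiK d ρ j y) * psiK d ρ k (x + y))
      = ∫ y : ℝ, ((ampl ρ j k x y : ℝ):ℂ) * phE d x y from
    integral_congr_ae (Filter.Eventually.of_forall hpsi)]
  -- support information
  have hsupp : ∀ y : ℝ, ampl ρ j k x y ≠ 0 →
      ((2:ℝ)^(j-1) ≤ y ∧ y ≤ (2:ℝ)^(j+1)) ∧ ((2:ℝ)^(k-1) ≤ x+y ∧ x+y ≤ (2:ℝ)^(k+1)) := by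
    intro y hy
    have h1 : rhoP ρ ((2:ℝ)^(-j)*y) ≠ 0 := fun h => hy (by unfold ampl; rw [h]; ring)
    have h2 : rhoP ρ ((2:ℝ)^(-k)*(x+y)) ≠ 0 := fun h => hy (by unfold ampl; rw [h]; ring)
    obtain ⟨a1, a2⟩ := rhoP_ne_zero hρ h1
    obtain ⟨b1, b2⟩ := rhoP_ne_zero hρ h2
    exact ⟨scale_bounds a1 a2, scale_bounds b1 b2⟩
  rcases lt_or_ge x ((2:ℝ)^(k-2)) with hx1 | hx1
  · -- x too small : integrand vanishes
    have h0 : ∀ y : ℝ, ((ampl ρ j k x y : ℝ):ℂ) * phE d x y = 0 := by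
      intro y
      rcases eq_or_ne (ampl ρ j k x y) 0 with h | h
      · rw [h]; simp
      · exfalso
        obtain ⟨⟨_, hy2⟩, ⟨hxy1, _⟩⟩ := hsupp y h
        have e1 : (2:ℝ)^(j+1) ≤ (2:ℝ)^(k-2) := hmono (by omega)
        have e2 : (2:ℝ)^(k-1) = (2:ℝ)^(k-2)*2 := by
          rw [show k-1 = (k-2)+1 by ring, zpow_add_one₀ two_ne]
        have := hpos (k-2)
        linarith
    rw [show (∫ y : ℝ, ((ampl ρ j k x y : ℝ):ℂ) * phE d x y) = ∫ _ : ℝ, (0:ℂ) from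
      integral_congr_ae (Filter.Eventually.of_forall h0)]
    simpa using hrhs0
  rcases lt_or_ge x ((2:ℝ)^(k+1)) with hx2 | hx2
  swap
  · -- x too large : integrand vanishes
    have h0 : ∀ y : ℝ, ((ampl ρ j k x y : ℝ):ℂ) * phE d x y = 0 := by
      intro y
      rcases eq_or_ne (ampl ρ j k x y) 0 with h | h
      · rw [h]; simp
      · exfalso
        obtain ⟨⟨hy1, _⟩, ⟨_, hxy2⟩⟩ := hsupp y h
        have := hpos (j-1)
        linarith
    rw [show (∫ y : ℝ, ((ampl ρ j k x y : ℝ):ℂ) * phE d x y) = ∫ _ : ℝ, (0:ℂ) from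
      integral_congr_ae (Filter.Eventually.of_forall h0)]
    simpa using hrhs0
  -- main case : 2^(k-2) ≤ x < 2^(k+1)
  have hxmem : x ∈ Set.Ico (-((2:ℝ)^(k+1))) ((2:ℝ)^(k+1)) := by
    constructor
    · have := hpos (k-2); have := hpos (k+1); linarith
    · exact hx2
  rw [Set.indicator_of_mem hxmem, mul_one]
  set A : ℝ := (2:ℝ)^(j-2) with hA
  set B : ℝ := (2:ℝ)^(j+2) with hB
  have hAB : A ≤ B := hmono (by omega)
  have hA0 : 0 < A := hpos _
  -- restrict the integral to (A, B]
  have hzero : ∀ y : ℝ, y ∉ Set.Ioc A B → ((ampl ρ j k x y : ℝ):ℂ) * phE d x y = 0 := by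
    intro y hy
    rcases eq_or_ne (ampl ρ j k x y) 0 with h | h
    · rw [h]; simp
    · exfalso
      obtain ⟨⟨hy1, hy2⟩, _⟩ := hsupp y h
      exact hy ⟨lt_of_lt_of_le (zpow_lt_zpow_right₀ one_lt_two (by omega)) hy1,
        le_trans hy2 (hmono (by omega))⟩
  rw [← MeasureTheory.setIntegral_eq_integral_of_forall_compl_eq_zero hzero,
    ← intervalIntegral.integral_of_le hAB]
  -- facts on the interval
  have hIcc : ∀ y ∈ Set.uIcc A B, 0 < y ∧ y ≤ (2:ℝ)^(j+2) ∧ (2:ℝ)^(k-2) ≤ x + y ∧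
      x + y ≤ (2:ℝ)^(k+2) ∧ 2*y ≤ x + y := by
    intro y hy
    rw [Set.uIcc_of_le hAB] at hy
    obtain ⟨hy1, hy2⟩ := hy
    have h1 : 0 < y := lt_of_lt_of_le hA0 hy1
    have hyB : y ≤ (2:ℝ)^(j+2) := hy2
    have hyx : y ≤ x := le_trans hyB (le_trans (hmono (by omega)) hx1)
    refine ⟨h1, hyB, by linarith, ?_, by linarith⟩
    have h3 : (2:ℝ)^(j+2) ≤ (2:ℝ)^(k+1) := hmono (by omega)
    have h4 : (2:ℝ)^(k+2) = (2:ℝ)^(k+1)*2 := by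
      rw [show k+2 = (k+1)+1 by ring, zpow_add_one₀ two_ne]
    linarith
  have hdm1 : d - 1 ≠ 0 := by omega
  have hPk1 : (1:ℝ) ≤ (2:ℝ)^(k-2) := one_le_zpow₀ one_le_two (by omega)
  -- lower bound for the phase derivative
  have hplow : ∀ y ∈ Set.uIcc A B,
      (x+y)^(d-1) ≤ pder d x y ∧ ((2:ℝ)^(k-2))^(d-1) ≤ (x+y)^(d-1) := by
    intro y hy
    obtain ⟨h1, h2, h3, h4, h5⟩ := hIcc y hy
    have hxy0 : (0:ℝ) < x + y := lt_of_lt_of_le (hpos (k-2)) h3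
    have hyb : y^(d-1) ≤ ((x+y)/2)^(d-1) := pow_le_pow_left₀ h1.le (by linarith) _
    have h2d : (2:ℝ) ≤ (2:ℝ)^(d-1) := by
      calc (2:ℝ) = (2:ℝ)^1 := (pow_one 2).symm
        _ ≤ (2:ℝ)^(d-1) := pow_le_pow_right₀ one_le_two (by omega)
    have hhalf : ((x+y)/2)^(d-1) ≤ (x+y)^(d-1)/2 := by
      rw [div_pow]
      exact div_le_div_of_nonneg_left (pow_nonneg hxy0.le _) two_pos h2d
    have hST : y^(d-1) ≤ (x+y)^(d-1)/2 := le_trans hyb hhalf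
    have hS0 : (0:ℝ) ≤ (x+y)^(d-1) := pow_nonneg hxy0.le _
    constructor
    · show (x+y)^(d-1) ≤ (d:ℝ) * ((x+y)^(d-1) - y^(d-1))
      nlinarith [mul_le_mul_of_nonneg_right hd2
        (by linarith : (0:ℝ) ≤ (x+y)^(d-1) - y^(d-1))]
    · exact pow_le_pow_left₀ (hpos (k-2)).le (by linarith) _
  -- bound for the second derivative of the phase
  have hp2bound : ∀ y ∈ Set.uIcc A B, |pder2 d x y| ≤ (d:ℝ)^2 * (x+y)^(d-2) := by
    intro y hy
    obtain ⟨h1, h2, h3, h4, h5⟩ := hIcc y hy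
    have hxy0 : (0:ℝ) ≤ x + y := le_trans (hpos (k-2)).le h3
    have h6 : y^(d-2) ≤ (x+y)^(d-2) := pow_le_pow_left₀ h1.le (by linarith) _
    have h7 : (0:ℝ) ≤ (x+y)^(d-2) := pow_nonneg hxy0 _
    have h8 : (0:ℝ) ≤ y^(d-2) := pow_nonneg h1.le _
    have hnn : (0:ℝ) ≤ pder2 d x y := by
      unfold pder2
      exact mul_nonneg (by linarith) (mul_nonneg (by linarith) (by linarith))
    rw [abs_of_nonneg hnn]
    unfold pder2
    calc (d:ℝ)*(((d:ℝ)-1)*((x+y)^(d-2) - y^(d-2)))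
        ≤ (d:ℝ)*((d:ℝ)*(x+y)^(d-2)) := by
          apply mul_le_mul_of_nonneg_left _ (by linarith : (0:ℝ) ≤ (d:ℝ))
          calc ((d:ℝ)-1)*((x+y)^(d-2) - y^(d-2)) ≤ ((d:ℝ)-1)*(x+y)^(d-2) :=
                mul_le_mul_of_nonneg_left (by linarith) (by linarith)
            _ ≤ (d:ℝ)*(x+y)^(d-2) := mul_le_mul_of_nonneg_right (by linarith) h7
      _ = (d:ℝ)^2*(x+y)^(d-2) := by ring
  -- bounds for the amplitude and its derivative
  have habs : ∀ t, |rhoP ρ t| ≤ M := fun t => (hM t).1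
  have hdabs : ∀ t, |deriv (rhoP ρ) t| ≤ M := fun t => (hM t).2
  have hAbound : ∀ y : ℝ, |ampl ρ j k x y| ≤ (2:ℝ)^(-j)*(2:ℝ)^(-k)*M^2 := fun y =>
    prod_bound (hpos (-j)) (hpos (-k)) (habs _) (habs _) hM0
  have hA'bound : ∀ y : ℝ, |ampl' ρ j k x y| ≤ 2*((2:ℝ)^(-j)*(2:ℝ)^(-j)*(2:ℝ)^(-k))*M^2 := by
    intro y
    have hkj : (2:ℝ)^(-k) ≤ (2:ℝ)^(-j) := hmono (by omega)
    have hT1 : |(((2:ℝ)^(-j)*(2:ℝ)^(-j)) * deriv (rhoP ρ) ((2:ℝ)^(-j)*y)) *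
        ((2:ℝ)^(-k) * rhoP ρ ((2:ℝ)^(-k)*(x+y)))| ≤ ((2:ℝ)^(-j)*(2:ℝ)^(-j))*(2:ℝ)^(-k)*M^2 :=
      prod_bound (mul_pos (hpos (-j)) (hpos (-j))) (hpos (-k)) (hdabs _) (habs _) hM0
    have hT2 : |((2:ℝ)^(-j) * rhoP ρ ((2:ℝ)^(-j)*y)) *
        (((2:ℝ)^(-k)*(2:ℝ)^(-k)) * deriv (rhoP ρ) ((2:ℝ)^(-k)*(x+y)))| ≤
        (2:ℝ)^(-j)*((2:ℝ)^(-k)*(2:ℝ)^(-k))*M^2 :=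
      prod_bound (hpos (-j)) (mul_pos (hpos (-k)) (hpos (-k))) (habs _) (hdabs _) hM0
    have hT2' : (2:ℝ)^(-j)*((2:ℝ)^(-k)*(2:ℝ)^(-k))*M^2 ≤
        ((2:ℝ)^(-j)*(2:ℝ)^(-j))*(2:ℝ)^(-k)*M^2 := by
      have hj0 := hpos (-j); have hk0 := hpos (-k)
      have h := mul_le_mul_of_nonneg_right (mul_le_mul_of_nonneg_right
        (mul_le_mul_of_nonneg_left hkj hj0.le) hk0.le) (sq_nonneg M)
      calc (2:ℝ)^(-j)*((2:ℝ)^(-k)*(2:ℝ)^(-k))*M^2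
          = (2:ℝ)^(-j)*(2:ℝ)^(-k)*(2:ℝ)^(-k)*M^2 := by ring
        _ ≤ (2:ℝ)^(-j)*(2:ℝ)^(-j)*(2:ℝ)^(-k)*M^2 := h
        _ = ((2:ℝ)^(-j)*(2:ℝ)^(-j))*(2:ℝ)^(-k)*M^2 := by ring
    calc |ampl' ρ j k x y| ≤ _ + _ := abs_add_le _ _
      _ ≤ ((2:ℝ)^(-j)*(2:ℝ)^(-j))*(2:ℝ)^(-k)*M^2 + ((2:ℝ)^(-j)*(2:ℝ)^(-j))*(2:ℝ)^(-k)*M^2 :=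
        add_le_add hT1 (le_trans hT2 hT2')
      _ = 2*((2:ℝ)^(-j)*(2:ℝ)^(-j)*(2:ℝ)^(-k))*M^2 := by ring
  -- the norm of the denominator
  have hDnorm : ∀ r : ℝ, ‖2*(Real.pi:ℂ)*Complex.I*((r:ℝ):ℂ)‖ = 2*Real.pi*|r| := by
    intro r
    simp only [norm_mul, Complex.norm_two, Complex.norm_I,
      Complex.norm_real, Real.norm_eq_abs, mul_one]
    rw [abs_of_pos Real.pi_pos]
  -- nonvanishing of the phase derivative on the interval
  have hpne : ∀ y ∈ Set.uIcc A B, pder d x y ≠ 0 := by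
    intro y hy
    obtain ⟨hpl1, hpl2⟩ := hplow y hy
    exact (lt_of_lt_of_le (pow_pos (hpos (k-2)) (d-1)) (le_trans hpl2 hpl1)).ne'
  -- IBP
  have hgd : ∀ y ∈ Set.uIcc A B, HasDerivAt (gq d ρ j k x) (gq' d ρ j k x y) y :=
    fun y hy => gq_hasDerivAt hρ hd1 j k (hpne y hy)
  have hEd : ∀ y ∈ Set.uIcc A B,
      HasDerivAt (phE d x) (2*(Real.pi:ℂ)*Complex.I*((pder d x y : ℝ):ℂ) * phE d x y) y :=
    fun y _ => phE_hasDerivAt d x y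
  -- continuity facts
  have hrpc : Continuous (rhoP ρ) := (rhoP_smooth hρ).continuous
  have hrdc : Continuous (deriv (rhoP ρ)) := (rhoP_smooth hρ).continuous_deriv (by simp)
  have hampc : Continuous (ampl ρ j k x) := by unfold ampl; fun_prop
  have hampc' : Continuous (ampl' ρ j k x) := by unfold ampl'; fun_prop
  have hpderc : Continuous (pder d x) := by unfold pder; fun_prop
  have hpder2c : Continuous (pder2 d x) := by unfold pder2; fun_prop
  have hphEc : Continuous (phE d x) := by
    unfold phE
    apply Complex.continuous_exp.comp
    fun_prop
  have hE'int : IntervalIntegrable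
      (fun y => 2*(Real.pi:ℂ)*Complex.I*((pder d x y : ℝ):ℂ) * phE d x y) volume A B := by
    apply Continuous.intervalIntegrable
    fun_prop
  have hg'int : IntervalIntegrable (gq' d ρ j k x) volume A B := by
    apply ContinuousOn.intervalIntegrable
    unfold gq'
    apply ContinuousOn.div
    · fun_prop
    · fun_prop
    · intro y hy
      apply pow_ne_zero
      exact mul_ne_zero (mul_ne_zero (mul_ne_zero two_ne_zero
        (Complex.ofReal_ne_zero.2 Real.pi_ne_zero)) Complex.I_ne_zero)
        (Complex.ofReal_ne_zero.2 (hpne y hy))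
  have hibp := intervalIntegral.integral_mul_deriv_eq_deriv_mul hgd hEd hg'int hE'int
  -- rewrite the integrand as gq * E'
  have hcongr : Set.EqOn (fun y => ((ampl ρ j k x y : ℝ):ℂ) * phE d x y)
      (fun y => gq d ρ j k x y * (2*(Real.pi:ℂ)*Complex.I*((pder d x y : ℝ):ℂ) * phE d x y))
      (Set.uIcc A B) := by
    intro y hy
    have hne : (2*(Real.pi:ℂ)*Complex.I*((pder d x y:ℝ):ℂ)) ≠ 0 :=
      mul_ne_zero (mul_ne_zero (mul_ne_zero two_ne_zero
        (Complex.ofReal_ne_zero.2 Real.pi_ne_zero)) Complex.I_ne_zero)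
        (Complex.ofReal_ne_zero.2 (hpne y hy))
    show ((ampl ρ j k x y : ℝ):ℂ) * phE d x y
        = gq d ρ j k x y * (2*(Real.pi:ℂ)*Complex.I*((pder d x y : ℝ):ℂ) * phE d x y)
    unfold gq
    field_simp
    rw [mul_div_assoc, div_self (Complex.ofReal_ne_zero.2 (hpne y hy)), mul_one]
  rw [intervalIntegral.integral_congr hcongr, hibp]
  -- boundary terms vanish
  have hrhoP14 : rhoP ρ ((4:ℝ)⁻¹) = 0 := by
    by_contra h
    have := (rhoP_ne_zero hρ h).1
    norm_num at this
  have hrhoP4 : rhoP ρ (4 : ℝ) = 0 := by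
    by_contra h
    have := (rhoP_ne_zero hρ h).2
    norm_num at this
  have hampA : ampl ρ j k x A = 0 := by
    unfold ampl
    rw [hA, show (2:ℝ)^(-j) * (2:ℝ)^(j-2) = (4:ℝ)⁻¹ by
      rw [← zpow_add₀ two_ne, show -j + (j-2) = (-2:ℤ) by ring]; norm_num]
    rw [hrhoP14]; ring
  have hampB : ampl ρ j k x B = 0 := by
    unfold ampl
    rw [hB, show (2:ℝ)^(-j) * (2:ℝ)^(j+2) = (4:ℝ) by
      rw [← zpow_add₀ two_ne, show -j + (j+2) = (2:ℤ) by ring]; norm_num]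
    rw [hrhoP4]; ring
  have hgA : gq d ρ j k x A = 0 := by unfold gq; rw [hampA]; simp
  have hgB : gq d ρ j k x B = 0 := by unfold gq; rw [hampB]; simp
  rw [hgA, hgB, zero_mul, zero_mul, sub_zero, zero_sub, norm_neg]
  -- useful zpow identities
  have e4 : (2:ℝ)^(-k) * (2:ℝ)^(-k) = (2:ℝ)^(-(2*k)) := by
    rw [← zpow_add₀ two_ne]; congr 1; ring
  have e5 : (2:ℝ)^(-k) * (2:ℝ)^(k-2) = (4:ℝ)⁻¹ := by
    rw [← zpow_add₀ two_ne, show -k + (k-2) = (-2:ℤ) by ring]; norm_num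
  have e6 : (2:ℝ)^(-(2*k)) * (2:ℝ)^(2*k-4) = (16:ℝ)⁻¹ := by
    rw [← zpow_add₀ two_ne, show -(2*k) + (2*k-4) = (-4:ℤ) by ring]; norm_num
  have e7 : (2:ℝ)^(-j) * (2:ℝ)^(j+2) = (4:ℝ) := by
    rw [← zpow_add₀ two_ne, show -j + (j+2) = (2:ℤ) by ring]; norm_num
  have hj1 : (2:ℝ)^(-j) ≤ 1 := by
    have := hmono (show -j ≤ 0 by omega); simpa using this
  have hk1 : (2:ℝ)^(-k) ≤ 1 := by
    have := hmono (show -k ≤ 0 by omega); simpa using this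
  -- the pointwise bound on gq' * phE
  set K : ℝ := (8*M^2 + 16*M^2*(d:ℝ)^2) * ((2:ℝ)^(-j) * (2:ℝ)^(-(2*k))) with hK
  have hgK : ∀ y ∈ Set.uIcc A B, ‖gq' d ρ j k x y * phE d x y‖ ≤ K := by
    intro y hy
    obtain ⟨hy0, hyB, hxy1, hxy2, hyhalf⟩ := hIcc y hy
    obtain ⟨hpl1, hpl2⟩ := hplow y hy
    have hxy0 : (0:ℝ) < x + y := lt_of_lt_of_le (hpos (k-2)) hxy1
    have hp0 : 0 < pder d x y :=
      lt_of_lt_of_le (pow_pos (hpos (k-2)) (d-1)) (le_trans hpl2 hpl1)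
    -- step A
    have stepA : ‖gq' d ρ j k x y‖ ≤
        (|ampl' ρ j k x y| * pder d x y + |ampl ρ j k x y| * |pder2 d x y|) / (pder d x y)^2 := by
      have hnum : ‖((ampl' ρ j k x y : ℝ):ℂ) * (2*(Real.pi:ℂ)*Complex.I*((pder d x y:ℝ):ℂ)) -
          ((ampl ρ j k x y : ℝ):ℂ) * (2*(Real.pi:ℂ)*Complex.I*((pder2 d x y:ℝ):ℂ))‖
          ≤ 2*Real.pi*(|ampl' ρ j k x y| * pder d x y + |ampl ρ j k x y| * |pder2 d x y|) := by
        calc ‖_ - _‖ ≤ ‖((ampl' ρ j k x y : ℝ):ℂ) * (2*(Real.pi:ℂ)*Complex.I*((pder d x y:ℝ):ℂ))‖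
              + ‖((ampl ρ j k x y : ℝ):ℂ) * (2*(Real.pi:ℂ)*Complex.I*((pder2 d x y:ℝ):ℂ))‖ :=
            norm_sub_le _ _
          _ = |ampl' ρ j k x y| * (2*Real.pi*|pder d x y|)
              + |ampl ρ j k x y| * (2*Real.pi*|pder2 d x y|) := by
            rw [norm_mul, hDnorm, norm_mul, hDnorm, Complex.norm_real, Complex.norm_real,
              Real.norm_eq_abs, Real.norm_eq_abs]
          _ = 2*Real.pi*(|ampl' ρ j k x y| * pder d x y + |ampl ρ j k x y| * |pder2 d x y|) := by
            rw [abs_of_pos hp0]; ring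
      have hkey : (2*Real.pi*(|ampl' ρ j k x y| * pder d x y + |ampl ρ j k x y| * |pder2 d x y|))
          / (2*Real.pi*|pder d x y|)^2
          ≤ (|ampl' ρ j k x y| * pder d x y + |ampl ρ j k x y| * |pder2 d x y|)
            / (pder d x y)^2 := by
        rw [abs_of_pos hp0, div_le_div_iff₀ (by positivity) (by positivity)]
        have hq1 : (0:ℝ) ≤ (|ampl' ρ j k x y| * pder d x y + |ampl ρ j k x y| * |pder2 d x y|)
            * (pder d x y)^2 := by positivity
        have hq2 : 2*Real.pi*1 ≤ 2*Real.pi*(2*Real.pi) := by nlinarith [Real.pi_gt_three]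
        calc (2*Real.pi*(|ampl' ρ j k x y| * pder d x y + |ampl ρ j k x y| * |pder2 d x y|))
              * (pder d x y)^2
            = (2*Real.pi*1)*((|ampl' ρ j k x y| * pder d x y
                + |ampl ρ j k x y| * |pder2 d x y|) * (pder d x y)^2) := by ring
          _ ≤ (2*Real.pi*(2*Real.pi))*((|ampl' ρ j k x y| * pder d x y
                + |ampl ρ j k x y| * |pder2 d x y|) * (pder d x y)^2) :=
            mul_le_mul_of_nonneg_right hq2 hq1
          _ = (|ampl' ρ j k x y| * pder d x y + |ampl ρ j k x y| * |pder2 d x y|)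
              * (2*Real.pi*pder d x y)^2 := by ring
      calc ‖gq' d ρ j k x y‖
          = ‖((ampl' ρ j k x y : ℝ):ℂ) * (2*(Real.pi:ℂ)*Complex.I*((pder d x y:ℝ):ℂ)) -
              ((ampl ρ j k x y : ℝ):ℂ) * (2*(Real.pi:ℂ)*Complex.I*((pder2 d x y:ℝ):ℂ))‖ /
            ‖2*(Real.pi:ℂ)*Complex.I*((pder d x y:ℝ):ℂ)‖^2 := by
            unfold gq'; rw [norm_div, norm_pow]
        _ ≤ (2*Real.pi*(|ampl' ρ j k x y| * pder d x y + |ampl ρ j k x y| * |pder2 d x y|)) /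
            (2*Real.pi*|pder d x y|)^2 := by
            rw [hDnorm]
            gcongr
        _ ≤ _ := hkey
    have hsplit : (|ampl' ρ j k x y| * pder d x y + |ampl ρ j k x y| * |pder2 d x y|)
        / (pder d x y)^2
        = |ampl' ρ j k x y| / pder d x y
          + |ampl ρ j k x y| * |pder2 d x y| / (pder d x y)^2 := by
      field_simp
    -- term 1
    have hpk : (2:ℝ)^(k-2) ≤ pder d x y :=
      le_trans (le_self_pow₀ hPk1 hdm1) (le_trans hpl2 hpl1)
    have hterm1 : |ampl' ρ j k x y| / pder d x y ≤
        (2*((2:ℝ)^(-j)*(2:ℝ)^(-j)*(2:ℝ)^(-k))*M^2) / (2:ℝ)^(k-2) :=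
      div_le_div₀ (by positivity) (hA'bound y) (hpos (k-2)) hpk
    have hterm1' : (2*((2:ℝ)^(-j)*(2:ℝ)^(-j)*(2:ℝ)^(-k))*M^2) / (2:ℝ)^(k-2)
        ≤ 8*M^2 * ((2:ℝ)^(-j) * (2:ℝ)^(-(2*k))) := by
      rw [div_le_iff₀ (hpos (k-2))]
      calc 2*((2:ℝ)^(-j)*(2:ℝ)^(-j)*(2:ℝ)^(-k))*M^2
          ≤ 2*((2:ℝ)^(-j)*1*(2:ℝ)^(-k))*M^2 := by gcongr
        _ = 8*M^2 * ((2:ℝ)^(-j) * (2:ℝ)^(-(2*k))) * (2:ℝ)^(k-2) := by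
            rw [← e4]
            linear_combination (-(8*M^2*(2:ℝ)^(-j)*(2:ℝ)^(-k))) * e5
    -- term 2
    have hnum2 : |ampl ρ j k x y| * |pder2 d x y| ≤
        ((2:ℝ)^(-j)*(2:ℝ)^(-k)*M^2) * ((d:ℝ)^2 * (x+y)^(d-2)) :=
      mul_le_mul (hAbound y) (hp2bound y hy) (abs_nonneg _) (by positivity)
    have hden2 : ((x+y)^(d-1))^2 ≤ (pder d x y)^2 :=
      pow_le_pow_left₀ (pow_nonneg hxy0.le _) hpl1 2
    have hterm2 : |ampl ρ j k x y| * |pder2 d x y| / (pder d x y)^2 ≤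
        ((2:ℝ)^(-j)*(2:ℝ)^(-k)*M^2) * ((d:ℝ)^2 * (x+y)^(d-2)) / ((x+y)^(d-1))^2 :=
      div_le_div₀ (by positivity) hnum2 (pow_pos (pow_pos hxy0 _) 2) hden2
    have hden2' : ((x+y)^(d-1))^2 = (x+y)^(d-2) * (x+y)^d := by
      rw [← pow_mul, ← pow_add]
      congr 1
      omega
    have hterm2' : ((2:ℝ)^(-j)*(2:ℝ)^(-k)*M^2) * ((d:ℝ)^2 * (x+y)^(d-2)) / ((x+y)^(d-1))^2
        = ((2:ℝ)^(-j)*(2:ℝ)^(-k)*M^2*(d:ℝ)^2) / (x+y)^d := by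
      rw [hden2', mul_comm ((x+y)^(d-2)) ((x+y)^d),
        show ((2:ℝ)^(-j)*(2:ℝ)^(-k)*M^2) * ((d:ℝ)^2 * (x+y)^(d-2))
          = ((2:ℝ)^(-j)*(2:ℝ)^(-k)*M^2*(d:ℝ)^2) * (x+y)^(d-2) by ring,
        mul_div_mul_right _ _ (by positivity : ((x+y):ℝ)^(d-2) ≠ 0)]
    have hxyd : (2:ℝ)^(2*k-4) ≤ (x+y)^d := by
      have hb1 : ((2:ℝ)^(k-2))^(2:ℕ) ≤ ((2:ℝ)^(k-2))^d := pow_le_pow_right₀ hPk1 hd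
      have hb2 : ((2:ℝ)^(k-2))^d ≤ (x+y)^d := pow_le_pow_left₀ (hpos (k-2)).le (by linarith) d
      have hb3 : ((2:ℝ)^(k-2))^(2:ℕ) = (2:ℝ)^(2*k-4) := by
        rw [← zpow_natCast ((2:ℝ)^(k-2)) 2, ← zpow_mul]
        congr 1
        ring
      linarith [hb3 ▸ hb1, hb2]
    have hterm2'' : ((2:ℝ)^(-j)*(2:ℝ)^(-k)*M^2*(d:ℝ)^2) / (x+y)^d
        ≤ 16*M^2*(d:ℝ)^2 * ((2:ℝ)^(-j) * (2:ℝ)^(-(2*k))) := by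
      calc ((2:ℝ)^(-j)*(2:ℝ)^(-k)*M^2*(d:ℝ)^2) / (x+y)^d
          ≤ ((2:ℝ)^(-j)*(2:ℝ)^(-k)*M^2*(d:ℝ)^2) / (2:ℝ)^(2*k-4) :=
            div_le_div_of_nonneg_left (by positivity) (hpos (2*k-4)) hxyd
        _ ≤ 16*M^2*(d:ℝ)^2 * ((2:ℝ)^(-j) * (2:ℝ)^(-(2*k))) := by
            rw [div_le_iff₀ (hpos (2*k-4))]
            calc (2:ℝ)^(-j)*(2:ℝ)^(-k)*M^2*(d:ℝ)^2
                ≤ (2:ℝ)^(-j)*1*M^2*(d:ℝ)^2 := by gcongr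
              _ = 16*M^2*(d:ℝ)^2 * ((2:ℝ)^(-j) * (2:ℝ)^(-(2*k))) * (2:ℝ)^(2*k-4) := by
                  linear_combination (-(16*M^2*(d:ℝ)^2*(2:ℝ)^(-j))) * e6
    rw [norm_mul, norm_phE, mul_one]
    calc ‖gq' d ρ j k x y‖
        ≤ (|ampl' ρ j k x y| * pder d x y + |ampl ρ j k x y| * |pder2 d x y|) / (pder d x y)^2 :=
          stepA
      _ = |ampl' ρ j k x y| / pder d x y
          + |ampl ρ j k x y| * |pder2 d x y| / (pder d x y)^2 := hsplit
      _ ≤ 8*M^2 * ((2:ℝ)^(-j) * (2:ℝ)^(-(2*k)))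
          + 16*M^2*(d:ℝ)^2 * ((2:ℝ)^(-j) * (2:ℝ)^(-(2*k))) := by
          apply add_le_add (le_trans hterm1 hterm1')
          calc |ampl ρ j k x y| * |pder2 d x y| / (pder d x y)^2
              ≤ ((2:ℝ)^(-j)*(2:ℝ)^(-k)*M^2) * ((d:ℝ)^2 * (x+y)^(d-2)) / ((x+y)^(d-1))^2 :=
                hterm2
            _ = ((2:ℝ)^(-j)*(2:ℝ)^(-k)*M^2*(d:ℝ)^2) / (x+y)^d := hterm2'
            _ ≤ 16*M^2*(d:ℝ)^2 * ((2:ℝ)^(-j) * (2:ℝ)^(-(2*k))) := hterm2''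
      _ = K := by rw [hK]; ring
  -- conclude
  have hfinal := intervalIntegral.norm_integral_le_of_norm_le_const
    (fun y hy => hgK y (Set.uIoc_subset_uIcc hy))
  have hBA : |B - A| ≤ (2:ℝ)^(j+2) := by
    rw [abs_of_nonneg (by linarith)]
    have := hpos (j-2)
    rw [hB]
    simp only [hA]
    linarith
  have hK0 : 0 ≤ K := by
    rw [hK]
    have := hpos (-j)
    have := hpos (-(2*k))
    positivity
  calc ‖∫ y in A..B, gq' d ρ j k x y * phE d x y‖ ≤ K * |B - A| := hfinal
    _ ≤ K * (2:ℝ)^(j+2) := mul_le_mul_of_nonneg_left hBA hK0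
    _ = (8*M^2 + 16*M^2*(d:ℝ)^2) * 4 * (2:ℝ)^(-(2*k)) := by
        rw [hK]
        linear_combination ((8*M^2 + 16*M^2*(d:ℝ)^2) * (2:ℝ)^(-(2*k))) * e7
    _ ≤ 100 * M^2 * (d:ℝ)^2 * (2:ℝ)^(-(2*k)) := by
        apply mul_le_mul_of_nonneg_right _ (hpos (-(2*k))).le
        have hd4 : (4:ℝ) ≤ (d:ℝ)^2 := by nlinarith
        nlinarith [mul_le_mul_of_nonneg_left hd4 (sq_nonneg M), sq_nonneg M]
end

section
/- There is an absolute constant C such that: for every measure space (X, μ), every integer N ≥ 1, every functions φ_1, …, φ_N ∈ L²(μ), and every A > 0 satisfying ‖Σ_{j=1}^N c_j φ_j‖_{L²(μ)} ≤ A for every choice of coefficients c_1, …, c_N ∈ {−1, 0, 1}, one has ‖ max_{1 ≤ n ≤ N} | Σ_{j=1}^n φ_j | ‖_{L²(μ)} ≤ C A log(2 + N). -/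
/-!
Along the binary digits of `m ≤ N`, the initial segment `[0, m)` splits into at most one dyadic
block `[i 2^k, (i + 1) 2^k)` per scale `k ≤ log₂ N`, so the partial sum `S_m` is bounded by
`∑_k G_k`, where `G_k` is the square function of the dyadic block sums at scale `k`.
Averaging `‖∑_i ± B_{k,i}‖²` over all sign patterns kills the cross terms and leaves
`∑_i ‖B_{k,i}‖²`, so the hypothesis on signed sums gives `‖G_k‖_{L²} ≤ A` for every scale.
Minkowski's inequality over the `log₂ N + 1` scales finishes the proof.
-/

open MeasureTheory Finset
open scoped ENNReal

theorem sum_powerset_norm_sq_signed_sum {ι E : Type*} [DecidableEq ι] [NormedAddCommGroup E]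
    [InnerProductSpace ℝ E] (s : Finset ι) (z : ι → E) :
    ∑ t ∈ s.powerset, ‖∑ i ∈ s, (if i ∈ t then z i else -z i)‖ ^ 2
      = 2 ^ #s * ∑ i ∈ s, ‖z i‖ ^ 2 := by
  induction s using Finset.induction_on with
  | empty => simp
  | @insert a s ha ih =>
    set S : Finset ι → E := fun t => ∑ i ∈ s, (if i ∈ t then z i else -z i)
    have pair : ∀ t ∈ s.powerset, ‖∑ i ∈ insert a s, (if i ∈ t then z i else -z i)‖ ^ 2
        + ‖∑ i ∈ insert a s, (if i ∈ insert a t then z i else -z i)‖ ^ 2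
        = 2 * ‖S t‖ ^ 2 + 2 * ‖z a‖ ^ 2 := by
      intro t ht
      have hat : a ∉ t := fun h => ha (mem_powerset.1 ht h)
      have : S (insert a t) = S t :=
        sum_congr rfl fun i hi => by simp [ne_of_mem_of_not_mem hi ha]
      rw [sum_insert ha, sum_insert ha, if_neg hat, if_pos (mem_insert_self a t)]
      change ‖-z a + S t‖ ^ 2 + ‖z a + S (insert a t)‖ ^ 2 = _
      rw [this, neg_add_eq_sub, add_comm (z a)]
      linarith [parallelogram_law_with_norm ℝ (S t) (z a)]
    rw [sum_powerset_insert ha, ← sum_add_distrib, sum_congr rfl pair, sum_add_distrib, ← mul_sum,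
      ih, sum_const, card_powerset, card_insert_of_notMem ha, sum_insert ha, nsmul_eq_mul]
    push_cast
    ring

theorem eLpNorm_two_sq_eq_lintegral {X E : Type*} [MeasurableSpace X] {μ : Measure X}
    [NormedAddCommGroup E] (f : X → E) :
    eLpNorm f 2 μ ^ 2 = ∫⁻ x, ‖f x‖ₑ ^ 2 ∂μ := by
  simpa using eLpNorm_nnreal_pow_eq_lintegral (μ := μ) (f := f) (p := 2) two_ne_zero

theorem enorm_sq_eq_ofReal_norm_sq {E : Type*} [NormedAddCommGroup E] (y : E) :
    ‖y‖ₑ ^ 2 = ENNReal.ofReal (‖y‖ ^ 2) := by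
  rw [← ofReal_norm, ENNReal.ofReal_pow (norm_nonneg y)]

theorem aestronglyMeasurable_signed_sum {ι X E : Type*} [DecidableEq ι] [MeasurableSpace X]
    {μ : Measure X} [NormedAddCommGroup E] (s t : Finset ι) {f : ι → X → E}
    (hf : ∀ i, AEStronglyMeasurable (f i) μ) :
    AEStronglyMeasurable (fun x => ∑ i ∈ s, (if i ∈ t then f i x else -f i x)) μ :=
  aestronglyMeasurable_fun_sum _ fun i _ => by split_ifs <;> fun_prop

theorem eLpNorm_sqrt_sum_sq_le_of_forall_signed {ι X E : Type*} [DecidableEq ι]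
    [MeasurableSpace X] {μ : Measure X} [NormedAddCommGroup E] [InnerProductSpace ℝ E]
    (s : Finset ι) {f : ι → X → E} (hf : ∀ i, AEStronglyMeasurable (f i) μ) {A : ℝ≥0∞}
    (hA : ∀ t ⊆ s, eLpNorm (fun x => ∑ i ∈ s, (if i ∈ t then f i x else -f i x)) 2 μ ≤ A) :
    eLpNorm (fun x => √(∑ i ∈ s, ‖f i x‖ ^ 2)) 2 μ ≤ A := by
  set I := ∫⁻ x, ENNReal.ofReal (∑ i ∈ s, ‖f i x‖ ^ 2) ∂μ
  have h2s : (2 : ℝ≥0∞) ^ #s ≠ 0 := pow_ne_zero _ two_ne_zero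
  have averaged : 2 ^ #s * I = ∑ t ∈ s.powerset,
      ∫⁻ x, ‖∑ i ∈ s, (if i ∈ t then f i x else -f i x)‖ₑ ^ 2 ∂μ := by
    rw [← lintegral_const_mul' _ _ (ENNReal.pow_ne_top ENNReal.ofNat_ne_top),
      ← lintegral_finsetSum' _ fun t _ =>
        (aestronglyMeasurable_signed_sum s t hf).enorm.pow_const 2]
    refine lintegral_congr fun x => ?_
    simp_rw [enorm_sq_eq_ofReal_norm_sq]
    rw [← ENNReal.ofReal_sum_of_nonneg fun _ _ => by positivity, sum_powerset_norm_sq_signed_sum,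
      ENNReal.ofReal_mul (by positivity)]
    norm_num
  have hI : I ≤ A ^ 2 := by
    refine (ENNReal.mul_le_mul_iff_right h2s (ENNReal.pow_ne_top ENNReal.ofNat_ne_top)).1 ?_
    calc 2 ^ #s * I ≤ ∑ _t ∈ s.powerset, A ^ 2 := by
          rw [averaged]
          refine sum_le_sum fun t ht => ?_
          rw [← eLpNorm_two_sq_eq_lintegral]
          exact pow_le_pow_left' (hA t (mem_powerset.1 ht)) 2
      _ = 2 ^ #s * A ^ 2 := by simp
  rw [← ENNReal.pow_le_pow_left_iff two_ne_zero, eLpNorm_two_sq_eq_lintegral]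
  refine (lintegral_congr fun x => ?_).trans_le hI
  rw [enorm_sq_eq_ofReal_norm_sq, Real.norm_of_nonneg (Real.sqrt_nonneg _),
    Real.sq_sqrt (by positivity)]

section Dyadic

variable {E : Type*}

def dyadicBlockSum [AddCommMonoid E] (φ : ℕ → E) (k i : ℕ) : E :=
  ∑ j ∈ Ico (i * 2 ^ k) ((i + 1) * 2 ^ k), φ j

noncomputable def dyadicSquareFunction [NormedAddCommGroup E] (φ : ℕ → E) (N k : ℕ) : ℝ :=
  √(∑ i ∈ range (N / 2 ^ k), ‖dyadicBlockSum φ k i‖ ^ 2)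

theorem sum_range_mul_two_pow_eq_sum_dyadicBlockSum [AddCommMonoid E] (φ : ℕ → E) (k M : ℕ) :
    ∑ j ∈ range (M * 2 ^ k), φ j = ∑ i ∈ range M, dyadicBlockSum φ k i := by
  induction M with
  | zero => simp
  | succ M ih =>
    rw [sum_range_succ, ← ih, dyadicBlockSum,
      sum_range_add_sum_Ico _ (Nat.mul_le_mul_right _ M.le_succ)]

theorem exists_signs_sum_eq_sum_signed_dyadicBlockSum [AddCommGroup E] (N k : ℕ) (t : Finset ℕ) :
    ∃ c : ℕ → ℤ, (∀ j, c j = -1 ∨ c j = 0 ∨ c j = 1) ∧ ∀ φ : ℕ → E,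
      ∑ j ∈ range N, c j • φ j
        = ∑ i ∈ range (N / 2 ^ k),
            (if i ∈ t then dyadicBlockSum φ k i else -dyadicBlockSum φ k i) := by
  set M := N / 2 ^ k
  refine ⟨fun j => if j < M * 2 ^ k then (if j / 2 ^ k ∈ t then 1 else -1) else 0,
    fun j => by dsimp only; split_ifs <;> simp, fun φ => ?_⟩
  have hMN : M * 2 ^ k ≤ N := Nat.div_mul_le_self N _
  rw [← sum_range_add_sum_Ico _ hMN, sum_eq_zero (s := Ico _ _) fun j hj => by
      simp [(mem_Ico.1 hj).1.not_gt], add_zero,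
    sum_range_mul_two_pow_eq_sum_dyadicBlockSum]
  refine sum_congr rfl fun i hi => ?_
  have hblock : ∀ j ∈ Ico (i * 2 ^ k) ((i + 1) * 2 ^ k), j < M * 2 ^ k ∧ j / 2 ^ k = i := by
    intro j hj
    rw [mem_Ico] at hj
    exact ⟨hj.2.trans_le (Nat.mul_le_mul_right _ (mem_range.1 hi)),
      Nat.div_eq_of_lt_le (by linarith) (by linarith)⟩
  rw [dyadicBlockSum, dyadicBlockSum]
  split_ifs with hit
  · exact sum_congr rfl fun j hj => by simp [hblock j hj, hit]
  · rw [← sum_neg_distrib]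
    exact sum_congr rfl fun j hj => by simp [hblock j hj, hit]

theorem sum_range_eq_sum_dyadic_Ico [AddCommGroup E] (φ : ℕ → E) {m K : ℕ} (hm : m < 2 ^ K) :
    ∑ j ∈ range m, φ j
      = ∑ k ∈ range K, ∑ j ∈ Ico (2 ^ (k + 1) * (m / 2 ^ (k + 1))) (2 ^ k * (m / 2 ^ k)), φ j := by
  set g : ℕ → ℕ := fun k => 2 ^ k * (m / 2 ^ k)
  have hg : ∀ k, g (k + 1) ≤ g k := fun k => by
    simp only [g, pow_succ, ← Nat.div_div_eq_div_mul, mul_assoc]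
    exact Nat.mul_le_mul_left _ (Nat.mul_div_le _ _)
  have hgK : g K = 0 := by simp [g, Nat.div_eq_of_lt hm]
  rw [sum_congr rfl fun k _ => sum_Ico_eq_sub φ (hg k), sum_range_sub', hgK]
  simp [g]

theorem norm_sum_dyadic_Ico_le_dyadicSquareFunction [NormedAddCommGroup E] (φ : ℕ → E)
    {m N : ℕ} (hmN : m ≤ N) (k : ℕ) :
    ‖∑ j ∈ Ico (2 ^ (k + 1) * (m / 2 ^ (k + 1))) (2 ^ k * (m / 2 ^ k)), φ j‖
      ≤ dyadicSquareFunction φ N k := by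
  set q := m / 2 ^ k
  have hlow : 2 ^ (k + 1) * (m / 2 ^ (k + 1)) = 2 ^ k * (2 * (q / 2)) := by
    rw [pow_succ, ← Nat.div_div_eq_div_mul, mul_assoc]
  rw [hlow]
  rcases Nat.even_or_odd' q with ⟨i, hq | hq⟩
  · rw [hq, Nat.mul_div_cancel_left _ two_pos, Ico_self, sum_empty, norm_zero]
    exact Real.sqrt_nonneg _
  · have hi : 2 * i < N / 2 ^ k := by
      have : q ≤ N / 2 ^ k := Nat.div_le_div_right hmN
      omega
    have hblock : ∑ j ∈ Ico (2 ^ k * (2 * (q / 2))) (2 ^ k * q), φ j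
        = dyadicBlockSum φ k (2 * i) := by
      rw [dyadicBlockSum, hq, Nat.mul_add_div two_pos, Nat.div_eq_of_lt one_lt_two, add_zero,
        mul_comm (2 ^ k), mul_comm (2 ^ k)]
    rw [hblock, dyadicSquareFunction, Real.le_sqrt (norm_nonneg _) (by positivity)]
    exact single_le_sum (f := fun i => ‖dyadicBlockSum φ k i‖ ^ 2) (fun _ _ => by positivity)
      (mem_range.2 hi)

theorem norm_sum_range_le_sum_dyadicSquareFunction [NormedAddCommGroup E] (φ : ℕ → E)
    {m N : ℕ} (hmN : m ≤ N) :
    ‖∑ j ∈ range m, φ j‖ ≤ ∑ k ∈ range (Nat.log 2 N + 1), dyadicSquareFunction φ N k := by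
  rw [sum_range_eq_sum_dyadic_Ico φ (hmN.trans_lt (Nat.lt_pow_succ_log_self one_lt_two N))]
  exact (norm_sum_le _ _).trans
    (sum_le_sum fun k _ => norm_sum_dyadic_Ico_le_dyadicSquareFunction φ hmN k)

end Dyadic

theorem cast_natLog_two_add_one_le (N : ℕ) :
    ((Nat.log 2 N + 1 : ℕ) : ℝ) ≤ 2 / Real.log 2 * Real.log (2 + N) := by
  have hlog2 : 0 < Real.log 2 := Real.log_pos one_lt_two
  have hpow : ((Nat.log 2 N : ℕ) : ℝ) * Real.log 2 ≤ Real.log (2 + N) := by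
    rw [← Real.log_pow]
    refine Real.log_le_log (by positivity) ?_
    exact_mod_cast (Nat.pow_log_le_add_one 2 N).trans (by omega)
  have htwo : Real.log 2 ≤ Real.log (2 + N) := Real.log_le_log two_pos (by simp)
  rw [div_mul_eq_mul_div, le_div_iff₀ hlog2]
  push_cast
  linarith

theorem aestronglyMeasurable_dyadicSquareFunction {X E : Type*} [MeasurableSpace X]
    {μ : Measure X} [NormedAddCommGroup E] {φ : ℕ → X → E}
    (hφ : ∀ j, AEStronglyMeasurable (φ j) μ) (N k : ℕ) :
    AEStronglyMeasurable (fun x => dyadicSquareFunction (φ · x) N k) μ := by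
  unfold dyadicSquareFunction dyadicBlockSum
  fun_prop

theorem eLpNorm_dyadicSquareFunction_le {X E : Type*} [MeasurableSpace X] {μ : Measure X}
    [NormedAddCommGroup E] [InnerProductSpace ℝ E] {N : ℕ} {φ : ℕ → X → E}
    (hφ : ∀ j, AEStronglyMeasurable (φ j) μ) {A : ℝ≥0∞}
    (hA : ∀ c : ℕ → ℤ, (∀ j, c j = -1 ∨ c j = 0 ∨ c j = 1) →
      eLpNorm (fun x => ∑ j ∈ range N, c j • φ j x) 2 μ ≤ A) (k : ℕ) :
    eLpNorm (fun x => dyadicSquareFunction (φ · x) N k) 2 μ ≤ A := by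
  refine eLpNorm_sqrt_sum_sq_le_of_forall_signed (range (N / 2 ^ k))
    (f := fun i x => dyadicBlockSum (φ · x) k i)
    (fun i => by unfold dyadicBlockSum; fun_prop) fun t _ => ?_
  obtain ⟨c, hc, hsum⟩ := exists_signs_sum_eq_sum_signed_dyadicBlockSum (E := E) N k t
  simpa only [hsum] using hA c hc

/-- an abstract Rademacher–Menshov theorem.  If all partial signed sums of
`φ₁, …, φ_N` have `L²(μ)` norm at most `A`, then the maximal partial sum function has
`L²(μ)` norm at most `C · A · log(2 + N)`. -/
theorem stmt6 :
    ∃ C : ℝ, 0 < C ∧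
      ∀ (X : Type) (_ : MeasurableSpace X) (μ : Measure X) (N : ℕ), 1 ≤ N →
        ∀ φ : ℕ → X → ℂ, (∀ j, MemLp (φ j) 2 μ) →
          ∀ A : ℝ, 0 < A →
            (∀ c : ℕ → ℤ, (∀ j, c j = -1 ∨ c j = 0 ∨ c j = 1) →
              eLpNorm (fun x => ∑ j ∈ Finset.range N, (c j : ℂ) * φ j x) 2 μ ≤
                ENNReal.ofReal A) →
            eLpNorm (fun x => ⨆ n : Fin N, ‖∑ j ∈ Finset.range (n + 1), φ j x‖) 2 μ ≤
              ENNReal.ofReal (C * A * Real.log (2 + N)) := by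
  refine ⟨2 / Real.log 2, div_pos two_pos (Real.log_pos one_lt_two), ?_⟩
  intro X _ μ N _ φ hφ A hA hsig
  have hφm : ∀ j, AEStronglyMeasurable (φ j) μ := fun j => (hφ j).aestronglyMeasurable
  have hsig_smul : ∀ c : ℕ → ℤ, (∀ j, c j = -1 ∨ c j = 0 ∨ c j = 1) →
      eLpNorm (fun x => ∑ j ∈ range N, c j • φ j x) 2 μ ≤ ENNReal.ofReal A := by
    simpa only [zsmul_eq_mul] using hsig
  set K := Nat.log 2 N + 1
  set G : ℕ → X → ℝ := fun k x => dyadicSquareFunction (φ · x) N k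
  calc eLpNorm (fun x => ⨆ n : Fin N, ‖∑ j ∈ range (n + 1), φ j x‖) 2 μ
      ≤ eLpNorm (∑ k ∈ range K, G k) 2 μ := eLpNorm_mono_real fun x => by
        rw [Real.norm_of_nonneg (Real.iSup_nonneg fun _ => norm_nonneg _), Finset.sum_apply]
        exact Real.iSup_le (fun n => norm_sum_range_le_sum_dyadicSquareFunction (φ · x) n.isLt)
          (sum_nonneg fun k _ => Real.sqrt_nonneg _)
    _ ≤ ∑ k ∈ range K, eLpNorm (G k) 2 μ :=
        eLpNorm_sum_le (fun k _ => aestronglyMeasurable_dyadicSquareFunction hφm N k) one_le_two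
    _ ≤ ∑ _k ∈ range K, ENNReal.ofReal A :=
        sum_le_sum fun k _ => eLpNorm_dyadicSquareFunction_le hφm hsig_smul k
    _ = ENNReal.ofReal (K * A) := by
        rw [sum_const, card_range, nsmul_eq_mul, ENNReal.ofReal_mul (Nat.cast_nonneg K),
          ENNReal.ofReal_natCast]
    _ ≤ ENNReal.ofReal (2 / Real.log 2 * A * Real.log (2 + N)) :=
        ENNReal.ofReal_le_ofReal (by nlinarith [cast_natLog_two_add_one_le N])
end

section
/- Let s ≥ 0, k_0 ≥ 1 be integers, c > 0, K > 0, and let I_0 ⊆ ℝ be an interval. Let b ≥ 0 be integrable and suppose (g_j)_{j ≥ s+k_0} are nonnegative measurable functions with Σ_j g_j ≤ b pointwise. For each j ≥ s+k_0 let 𝓝(j) be a collection of pairwise disjoint subintervals of I_0, each of length 2^{j+2}, such that ∫_I g_j dx ≥ c 2^{−s} |I| for every I ∈ 𝓝(j). Then for every interval J with ∫_J b dx ≤ K |J|: Σ_{j ≥ s+k_0} Σ_{I ∈ 𝓝(j), I ⊆ J} |I| ≤ (K/c) 2^{s} |J|. (This is the Carleson measure estimate used for the collections of non-standard intervals.)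 -/
/-!
Each interval `I ∈ 𝓝(j)` lying in `J` carries `g_j`-mass at least `c 2^{-s} |I|`. For a fixed `j`
these intervals are disjoint, so their masses add up to at most `∫_J g_j`; summing over `j` and
using `Σ_j g_j ≤ b` bounds `c 2^{-s} Σ_j Σ_I |I|` by `∫_J b ≤ K |J|`. Working with `ℝ≥0∞`-valued
sums and lintegrals, the sums over the (possibly uncountable) families need no summability
argument.
-/

open MeasureTheory Set Function

open scoped ENNReal

theorem ENNReal.tsum_ofReal_le_ofReal_of_forall_sum_le {ι : Type*} {a : ι → ℝ} {B : ℝ}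
    (ha : ∀ i, 0 ≤ a i) (h : ∀ F : Finset ι, ∑ i ∈ F, a i ≤ B) :
    ∑' i, ENNReal.ofReal (a i) ≤ ENNReal.ofReal B := by
  rw [ENNReal.tsum_eq_iSup_sum]
  refine iSup_le fun F => ?_
  rw [← ENNReal.ofReal_sum_of_nonneg fun i _ => ha i]
  exact ENNReal.ofReal_le_ofReal (h F)

theorem ENNReal.le_ofReal_div_of_ofReal_mul_le {x : ℝ≥0∞} {a B : ℝ} (ha : 0 < a)
    (h : ENNReal.ofReal a * x ≤ ENNReal.ofReal B) : x ≤ ENNReal.ofReal (B / a) := by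
  rw [ENNReal.ofReal_div_of_pos ha, ENNReal.le_div_iff_mul_le (by simp [ha]) (by simp), mul_comm]
  exact h

namespace MeasureTheory

variable {α : Type*} [MeasurableSpace α] {μ : Measure α}

theorem ofReal_integral_le_lintegral_ofReal {f : α → ℝ} (hf : 0 ≤ᵐ[μ] f)
    (hfm : AEStronglyMeasurable f μ) :
    ENNReal.ofReal (∫ x, f x ∂μ) ≤ ∫⁻ x, ENNReal.ofReal (f x) ∂μ := by
  rw [integral_eq_lintegral_of_nonneg_ae hf hfm]
  exact ENNReal.ofReal_toReal_le

theorem tsum_setLIntegral_le_of_pairwise_disjoint {κ : Type*} {f : α → ℝ≥0∞} {t : Set α}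
    {I : κ → Set α} (hI : ∀ k, MeasurableSet (I k)) (hdisj : Pairwise (Disjoint on I))
    (ht : MeasurableSet t) (hIt : ∀ k, I k ⊆ t) :
    ∑' k, ∫⁻ x in I k, f x ∂μ ≤ ∫⁻ x in t, f x ∂μ := by
  simp only [← withDensity_apply _ (hI _), ← withDensity_apply _ ht]
  exact (tsum_meas_le_meas_iUnion_of_disjoint _ hI hdisj).trans
    (measure_mono (iUnion_subset hIt))

theorem tsum_tsum_setLIntegral_le_setLIntegral_tsum {ι : Type*} [Countable ι] {κ : ι → Type*}
    {f : ι → α → ℝ≥0∞} {t : Set α} (hf : ∀ i, AEMeasurable (f i) (μ.restrict t))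
    {I : (i : ι) → κ i → Set α} (hI : ∀ i k, MeasurableSet (I i k))
    (hdisj : ∀ i, Pairwise (Disjoint on I i)) (ht : MeasurableSet t) (hIt : ∀ i k, I i k ⊆ t) :
    ∑' i, ∑' k, ∫⁻ x in I i k, f i x ∂μ ≤ ∫⁻ x in t, ∑' i, f i x ∂μ := by
  rw [lintegral_tsum hf]
  exact ENNReal.tsum_le_tsum fun i =>
    tsum_setLIntegral_le_of_pairwise_disjoint (hI i) (hdisj i) ht (hIt i)

end MeasureTheory

theorem stmt13_general (s k0 : ℤ) (c K : ℝ) (hc : 0 < c)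
    (b : ℝ → ℝ) (hb : Integrable b) (hbnn : ∀ x, 0 ≤ b x)
    (g : ℤ → ℝ → ℝ) (hgm : ∀ j, Measurable (g j)) (hgnn : ∀ j x, 0 ≤ g j x)
    (hsum : ∀ x : ℝ, ∀ F : Finset ℤ, (∀ j ∈ F, s + k0 ≤ j) →
      (∑ j ∈ F, g j x) ≤ b x)
    (𝓝 : ℤ → Set (ℝ × ℝ))
    (hdisj : ∀ j : ℤ, (𝓝 j).PairwiseDisjoint (fun p => Set.Ioo p.1 p.2))
    (hmass : ∀ j : ℤ, s + k0 ≤ j → ∀ p ∈ 𝓝 j,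
      c * (2:ℝ) ^ (-s) * (p.2 - p.1) ≤ ∫ x in Set.Ioo p.1 p.2, g j x) :
    ∀ u v : ℝ, u ≤ v → (∫ x in Set.Icc u v, b x) ≤ K * (v - u) →
      (∑' j : {j : ℤ // s + k0 ≤ j},
          ∑' p : {p : ℝ × ℝ // p ∈ 𝓝 (j : ℤ) ∧ Set.Ioo p.1 p.2 ⊆ Set.Icc u v},
            ENNReal.ofReal ((p : ℝ × ℝ).2 - (p : ℝ × ℝ).1)) ≤
        ENNReal.ofReal (K / c * (2:ℝ) ^ s * (v - u)) := by
  intro u v _ hJ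
  have hsum' : ∀ x (F : Finset {j : ℤ // s + k0 ≤ j}), ∑ j ∈ F, g j x ≤ b x := fun x F => by
    simpa [Finset.sum_map] using hsum x (F.map (Embedding.subtype _))
      (by simp only [Finset.mem_map]; rintro _ ⟨j, -, rfl⟩; exact j.2)
  have ha : 0 < c * (2:ℝ) ^ (-s) := by positivity
  have hbound : K / c * (2:ℝ) ^ s * (v - u) = K * (v - u) / (c * (2:ℝ) ^ (-s)) := by
    rw [zpow_neg]
    field_simp
  rw [hbound]
  refine ENNReal.le_ofReal_div_of_ofReal_mul_le ha ?_
  simp_rw [← ENNReal.tsum_mul_left, ← ENNReal.ofReal_mul ha.le]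
  calc _ ≤ ∑' j : {j : ℤ // s + k0 ≤ j},
          ∑' p : {p : ℝ × ℝ // p ∈ 𝓝 (j : ℤ) ∧ Set.Ioo p.1 p.2 ⊆ Set.Icc u v},
            ∫⁻ x in Set.Ioo (p : ℝ × ℝ).1 (p : ℝ × ℝ).2, ENNReal.ofReal (g j x) :=
        ENNReal.tsum_le_tsum fun j => ENNReal.tsum_le_tsum fun p =>
          (ENNReal.ofReal_le_ofReal (hmass j j.2 p p.2.1)).trans
            (ofReal_integral_le_lintegral_ofReal (ae_of_all _ (hgnn j))
              (hgm j).aestronglyMeasurable)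
    _ ≤ ∫⁻ x in Set.Icc u v, ∑' j : {j : ℤ // s + k0 ≤ j}, ENNReal.ofReal (g j x) :=
        tsum_tsum_setLIntegral_le_setLIntegral_tsum
          (fun _ => (hgm _).ennreal_ofReal.aemeasurable) (fun _ _ => measurableSet_Ioo)
          (fun j p q hpq => hdisj j p.2.1 q.2.1 (Subtype.val_injective.ne hpq))
          measurableSet_Icc fun _ p => p.2.2
    _ ≤ ∫⁻ x in Set.Icc u v, ENNReal.ofReal (b x) :=
        lintegral_mono fun x =>
          ENNReal.tsum_ofReal_le_ofReal_of_forall_sum_le (fun j => hgnn j x) (hsum' x)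
    _ = ENNReal.ofReal (∫ x in Set.Icc u v, b x) :=
        (ofReal_integral_eq_lintegral_ofReal hb.integrableOn (ae_of_all _ hbnn)).symm
    _ ≤ ENNReal.ofReal (K * (v - u)) := ENNReal.ofReal_le_ofReal hJ

/-- the abstract Carleson measure estimate.  If the pairwise disjoint
intervals of `𝓝(j)` (each of length `2^{j+2}`) carry mass `∫_I g_j ≥ c 2^{-s} |I|`, and
`Σ_j g_j ≤ b` pointwise, then for every interval `J` with `∫_J b ≤ K |J|` one has
`Σ_j Σ_{I ∈ 𝓝(j), I ⊆ J} |I| ≤ (K/c) 2^s |J|`. -/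
theorem stmt13 (s k0 : ℤ) (hs : 0 ≤ s) (hk0 : 1 ≤ k0) (c K : ℝ) (hc : 0 < c)
    (hK : 0 < K) (a0 b0 : ℝ) (b : ℝ → ℝ) (hb : Integrable b) (hbnn : ∀ x, 0 ≤ b x)
    (g : ℤ → ℝ → ℝ) (hgm : ∀ j, Measurable (g j)) (hgnn : ∀ j x, 0 ≤ g j x)
    (hsum : ∀ x : ℝ, ∀ F : Finset ℤ, (∀ j ∈ F, s + k0 ≤ j) →
      (∑ j ∈ F, g j x) ≤ b x)
    (𝓝 : ℤ → Set (ℝ × ℝ))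
    (hsub : ∀ j : ℤ, ∀ p ∈ 𝓝 j, Set.Ioo p.1 p.2 ⊆ Set.Icc a0 b0 ∧
      p.2 - p.1 = (2:ℝ) ^ (j + 2))
    (hdisj : ∀ j : ℤ, (𝓝 j).PairwiseDisjoint (fun p => Set.Ioo p.1 p.2))
    (hmass : ∀ j : ℤ, s + k0 ≤ j → ∀ p ∈ 𝓝 j,
      c * (2:ℝ) ^ (-s) * (p.2 - p.1) ≤ ∫ x in Set.Ioo p.1 p.2, g j x) :
    ∀ u v : ℝ, u ≤ v → (∫ x in Set.Icc u v, b x) ≤ K * (v - u) →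
      (∑' j : {j : ℤ // s + k0 ≤ j},
          ∑' p : {p : ℝ × ℝ // p ∈ 𝓝 (j : ℤ) ∧ Set.Ioo p.1 p.2 ⊆ Set.Icc u v},
            ENNReal.ofReal ((p : ℝ × ℝ).2 - (p : ℝ × ℝ).1)) ≤
        ENNReal.ofReal (K / c * (2:ℝ) ^ s * (v - u)) :=
  stmt13_general s k0 c K hc b hb hbnn g hgm hgnn hsum 𝓝 hdisj hmass
end

section
/- Fix an integer d ≥ 2, K > 4 and C₀ > 0. There exist an integer k_0 ≥ 1 and a constant C, depending only on d, ρ, K and C₀, such that the following holds for every integer s ≥ 0. Adopt the Calderón–Zygmund setup for f on I_0, and let 𝓝 be a collection of dyadic subintervals of I_0 such that each I ∈ 𝓝 has length |I| = 2^{j(I)+2} with j(I) ≥ s+k_0 and satisfies the pointwise bound |T_I^* T_I B_{j(I)−s}(x)| ≤ C₀ |I|^{−1} (1_{[−1/2,1/2]} * (B_{j(I)−s} 1_{I'}))(x) for all x. Then Σ_{I ∈ 𝓝} ‖T_I B_{j(I)−s}‖_{L²(ℝ)}² ≤ C 2^{−s} |I_0|. -/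
open MeasureTheory Set

/-- The dyadic interval `[2^k n, 2^k (n+1))`, encoded by the pair `p = (k, n)`. -/
def dyad (p : ℤ × ℤ) : Set ℝ :=
  Set.Ico ((2:ℝ) ^ p.1 * (p.2 : ℝ)) ((2:ℝ) ^ p.1 * ((p.2 : ℝ) + 1))

/-- The middle third `I'` of the dyadic interval `I = dyad p`. -/
def dyadMid (p : ℤ × ℤ) : Set ℝ :=
  Set.Ico ((2:ℝ) ^ p.1 * (p.2 : ℝ) + (2:ℝ) ^ p.1 / 3)
    ((2:ℝ) ^ p.1 * (p.2 : ℝ) + 2 * (2:ℝ) ^ p.1 / 3)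

/-- The average `⟨f⟩_I = |I|⁻¹ ∫_I |f|` over the dyadic interval `I = dyad p`,
whose length is `2^{p.1}`. -/
noncomputable def avgD (f : ℝ → ℝ) (p : ℤ × ℤ) : ℝ :=
  (2:ℝ) ^ (-p.1) * ∫ x in dyad p, |f x|

/-- The `r`-average `⟨f⟩_{I,r} = (|I|⁻¹ ∫_I |f|^r)^{1/r}` over `I = dyad p`. -/
noncomputable def avgDr (f : ℝ → ℝ) (p : ℤ × ℤ) (r : ℝ) : ℝ :=
  ((2:ℝ) ^ (-p.1) * ∫ x in dyad p, |f x| ^ r) ^ (1 / r)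

/-- `T_I g (x) = ∫ ψ_k(y) (g 1_{I'})(x - y) dy` for the dyadic interval `I = dyad p`
of length `2^{p.1} = 2^{k+2}`, i.e. `k = p.1 - 2`. -/
noncomputable def TI (d : ℕ) (ρ : ℝ → ℝ) (p : ℤ × ℤ) (g : ℝ → ℂ) (x : ℝ) : ℂ :=
  ∫ y : ℝ, psiK d ρ (p.1 - 2) y * Set.indicator (dyadMid p) g (x - y)

/-- The adjoint of `T_I` on `L²`. -/
noncomputable def TIstar (d : ℕ) (ρ : ℝ → ℝ) (p : ℤ × ℤ) (h : ℝ → ℂ) : ℝ → ℂ :=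
  Set.indicator (dyadMid p)
    (fun z => ∫ y : ℝ, (starRingEnd ℂ) (psiK d ρ (p.1 - 2) y) * h (z + y))

/-- The maximal truncated sum `T_{*,𝓘} g = sup_{l ≥ k0} | Σ_{I ∈ 𝓘, |I| ≥ 2^l} T_I g |`
over a finite collection `𝓘` of dyadic intervals. -/
noncomputable def TstarF (d : ℕ) (ρ : ℝ → ℝ) (k0 : ℤ) (𝓘 : Finset (ℤ × ℤ))
    (g : ℝ → ℂ) (x : ℝ) : ℝ :=
  ⨆ l : {l : ℤ // k0 ≤ l},
    ‖∑ p ∈ 𝓘.filter (fun p => (l : ℤ) ≤ p.1), TI d ρ p g x‖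

/-- Calderón–Zygmund setup: `f ≥ 0` is bounded measurable, supported on the dyadic
interval `I₀`, with `⟨f⟩_{I₀} = 1`, and `𝓑` is the collection of maximal dyadic
subintervals `J ⊆ I₀` with `⟨f⟩_J > K`. -/
def CZsetup (K : ℝ) (I0 : ℤ × ℤ) (f : ℝ → ℝ) (𝓑 : Set (ℤ × ℤ)) : Prop :=
  Measurable f ∧ (∀ x, 0 ≤ f x) ∧ (∃ M, ∀ x, f x ≤ M) ∧
  (∀ x, x ∉ dyad I0 → f x = 0) ∧ avgD f I0 = 1 ∧
  (∀ J ∈ 𝓑, dyad J ⊆ dyad I0 ∧ K < avgD f J) ∧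
  (∀ J ∈ 𝓑, ∀ J' : ℤ × ℤ, dyad J ⊂ dyad J' → dyad J' ⊆ dyad I0 → avgD f J' ≤ K) ∧
  (∀ J' : ℤ × ℤ, dyad J' ⊆ dyad I0 → K < avgD f J' → ∃ J ∈ 𝓑, dyad J' ⊆ dyad J)

/-- `B_k = Σ_{J ∈ 𝓑(k)} f 1_J` where `𝓑(k) = {J ∈ 𝓑 : max(2^{k₀}, |J|) = 2^k}`; since
the intervals of `𝓑` are pairwise disjoint, this equals `f` restricted to their union. -/
noncomputable def Bfun (k0 : ℤ) (𝓑 : Set (ℤ × ℤ)) (f : ℝ → ℝ) (k : ℤ) : ℝ → ℝ :=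
  Set.indicator (⋃ J ∈ {J ∈ 𝓑 | max k0 J.1 = k}, dyad J) f

lemma zpow_pos' (k : ℤ) : (0:ℝ) < 2 ^ k := zpow_pos two_pos k

lemma dyad_lo_lt_hi (p : ℤ × ℤ) : (2:ℝ) ^ p.1 * p.2 < 2 ^ p.1 * (p.2 + 1) := by
  have := zpow_pos' p.1; nlinarith

lemma dyad_nonempty (p : ℤ × ℤ) : (dyad p).Nonempty :=
  ⟨_, mem_Ico.2 ⟨le_refl _, dyad_lo_lt_hi p⟩⟩

lemma dyad_measurable (p : ℤ × ℤ) : MeasurableSet (dyad p) := measurableSet_Ico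

lemma dyad_volume (p : ℤ × ℤ) : volume (dyad p) = ENNReal.ofReal ((2:ℝ) ^ p.1) := by
  rw [dyad, Real.volume_Ico]; ring_nf

lemma dyadMid_subset (p : ℤ × ℤ) : dyadMid p ⊆ dyad p := by
  have h := zpow_pos' p.1
  apply Set.Ico_subset_Ico <;> nlinarith

lemma dyad_vol_mono {p q : ℤ × ℤ} (h : dyad p ⊆ dyad q) : (2:ℝ) ^ p.1 ≤ 2 ^ q.1 := by
  have := measure_mono (μ := volume) h
  rw [dyad_volume, dyad_volume] at this
  exact (ENNReal.ofReal_le_ofReal_iff (zpow_pos' q.1).le).1 this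

lemma dyad_scale_mono {p q : ℤ × ℤ} (h : dyad p ⊆ dyad q) : p.1 ≤ q.1 := by
  by_contra hc
  exact absurd (dyad_vol_mono h) (not_le.2 (zpow_lt_zpow_right₀ one_lt_two (not_le.1 hc)))

lemma dyad_inj {p q : ℤ × ℤ} (h : dyad p = dyad q) : p = q := by
  have h1 : p.1 = q.1 :=
    le_antisymm (dyad_scale_mono h.le) (dyad_scale_mono h.ge)
  have hp := dyad_nonempty p
  have hlo : (2:ℝ) ^ p.1 * p.2 ∈ dyad q := h ▸ (mem_Ico.2 ⟨le_refl _, dyad_lo_lt_hi p⟩)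
  have hlo' : (2:ℝ) ^ q.1 * q.2 ∈ dyad p := h ▸ (mem_Ico.2 ⟨le_refl _, dyad_lo_lt_hi q⟩)
  have h2 : p.2 = q.2 := by
    have a1 := (mem_Ico.1 hlo).1
    have a2 := (mem_Ico.1 hlo').1
    rw [h1] at a1 a2
    have := zpow_pos' q.1
    have : (p.2 : ℝ) = q.2 := by nlinarith
    exact_mod_cast this
  exact Prod.ext h1 h2

/-- Two dyadic intervals that intersect are nested. -/
lemma dyad_subset_of_le {p q : ℤ × ℤ} (hle : p.1 ≤ q.1)
    (hx : (dyad p ∩ dyad q).Nonempty) : dyad p ⊆ dyad q := by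
  obtain ⟨x, hxp, hxq⟩ := hx
  obtain ⟨a, n⟩ := p; obtain ⟨b, m⟩ := q
  simp only [dyad] at *
  set c : ℕ := (b - a).toNat with hc
  have hb : (2:ℝ) ^ b = 2 ^ a * ((2 ^ c : ℤ) : ℝ) := by
    push_cast
    rw [← zpow_natCast (2:ℝ) c, ← zpow_add₀ (two_ne_zero)]
    congr 1; omega
  set M : ℤ := 2 ^ c * m with hM
  have ha := zpow_pos' a
  have e1 : (2:ℝ) ^ b * m = 2 ^ a * (M : ℝ) := by rw [hb, hM]; push_cast; ring
  have e2 : (2:ℝ) ^ b * (m + 1) = 2 ^ a * ((M : ℝ) + (2 ^ c : ℤ)) := by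
    rw [hb, hM]; push_cast; ring
  rw [e1, e2] at hxq
  obtain ⟨l1, r1⟩ := mem_Ico.1 hxp
  obtain ⟨l2, r2⟩ := mem_Ico.1 hxq
  have hMn : M ≤ n := by
    have h' : (2:ℝ) ^ a * M < 2 ^ a * (n + 1) := lt_of_le_of_lt l2 r1
    have hr : (M:ℝ) < (n:ℝ) + 1 := (mul_lt_mul_iff_right₀ ha).1 h'
    have : (M:ℝ) < ((n + 1 : ℤ) : ℝ) := by push_cast; linarith
    have := Int.cast_lt.1 this
    omega
  have hnM : n + 1 ≤ M + 2 ^ c := by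
    have h' : (2:ℝ) ^ a * n < 2 ^ a * (M + (2 ^ c : ℤ)) := lt_of_le_of_lt l1 r2
    have hr : (n:ℝ) < (M:ℝ) + ((2:ℤ) ^ c : ℤ) := (mul_lt_mul_iff_right₀ ha).1 h'
    have : (n:ℝ) < ((M + 2 ^ c : ℤ) : ℝ) := by push_cast at hr ⊢; linarith
    have := Int.cast_lt.1 this
    omega
  rw [e1, e2]
  apply Set.Ico_subset_Ico
  · have : (M:ℝ) ≤ n := by exact_mod_cast hMn
    nlinarith
  · have : (n:ℝ) + 1 ≤ (M:ℝ) + ((2:ℤ) ^ c : ℤ) := by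
      have : ((n + 1 : ℤ) : ℝ) ≤ ((M + 2 ^ c : ℤ) : ℝ) := by exact_mod_cast hnM
      push_cast at this ⊢; linarith
    nlinarith

lemma dyad_nested_or_disjoint (p q : ℤ × ℤ) :
    dyad p ⊆ dyad q ∨ dyad q ⊆ dyad p ∨ dyad p ∩ dyad q = ∅ := by
  rcases Set.eq_empty_or_nonempty (dyad p ∩ dyad q) with h | h
  · exact Or.inr (Or.inr h)
  · rcases le_total p.1 q.1 with hle | hle
    · exact Or.inl (dyad_subset_of_le hle h)
    · exact Or.inr (Or.inl (dyad_subset_of_le hle ⟨h.choose, h.choose_spec.2, h.choose_spec.1⟩))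

/-- parent interval -/
lemma dyad_subset_parent (p : ℤ × ℤ) : dyad p ⊆ dyad (p.1 + 1, p.2 / 2) := by
  obtain ⟨a, n⟩ := p
  simp only [dyad]
  have ha := zpow_pos' a
  have hz : (2:ℝ) ^ (a + 1) = 2 ^ a * 2 := by rw [zpow_add_one₀ (two_ne_zero)]
  have h1 : (2:ℤ) * (n / 2) ≤ n := by omega
  have h2 : n ≤ 2 * (n / 2) + 1 := by omega
  have h1' : (2:ℝ) * ((n / 2 : ℤ) : ℝ) ≤ (n:ℝ) := by exact_mod_cast h1
  have h2' : (n:ℝ) ≤ 2 * ((n / 2 : ℤ) : ℝ) + 1 := by exact_mod_cast h2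
  apply Set.Ico_subset_Ico
  · rw [hz]; nlinarith
  · rw [hz]; nlinarith

lemma dyad_ssubset_parent (p : ℤ × ℤ) : dyad p ⊂ dyad (p.1 + 1, p.2 / 2) := by
  refine ⟨dyad_subset_parent p, fun hsub => ?_⟩
  have := dyad_scale_mono hsub
  simp at this

lemma dyad_disjoint_same_scale {p q : ℤ × ℤ} (h1 : p.1 = q.1) (h2 : p ≠ q) :
    dyad p ∩ dyad q = ∅ := by
  by_contra hne
  have hx := Set.nonempty_iff_ne_empty.2 hne
  have hx' : (dyad q ∩ dyad p).Nonempty := by rwa [Set.inter_comm]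
  have hpq := dyad_subset_of_le h1.le hx
  have hqp := dyad_subset_of_le h1.ge hx'
  exact h2 (dyad_inj (Set.Subset.antisymm hpq hqp))

lemma dyadMid_disjoint_same_scale {p q : ℤ × ℤ} (h1 : p.1 = q.1) (h2 : p ≠ q) :
    dyadMid p ∩ dyadMid q = ∅ := by
  have := dyad_disjoint_same_scale h1 h2
  apply Set.eq_empty_of_subset_empty
  calc dyadMid p ∩ dyadMid q ⊆ dyad p ∩ dyad q :=
        Set.inter_subset_inter (dyadMid_subset p) (dyadMid_subset q)
    _ = ∅ := this

lemma psiK_measurable (d : ℕ) {ρ : ℝ → ℝ} (hρc : Continuous ρ) (k : ℤ) :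
    Measurable (psiK d ρ k) := by
  apply Measurable.mul
  · exact Complex.measurable_ofReal.comp ((continuous_const.mul
      (hρc.comp (continuous_const.mul continuous_id))).measurable)
  · apply Measurable.ite (measurableSet_lt measurable_const measurable_id)
    · exact (Complex.continuous_exp.comp (continuous_const.mul
        ((Complex.continuous_ofReal.pow d)))).measurable
    · exact measurable_const

lemma psiK_norm_le (d : ℕ) (ρ : ℝ → ℝ) (k : ℤ) (y : ℝ) :
    ‖psiK d ρ k y‖ ≤ |(2:ℝ) ^ (-k) * ρ ((2:ℝ) ^ (-k) * y)| := by
  rw [psiK, norm_mul, Complex.norm_real]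
  rcases lt_or_ge 0 y with h | h
  · rw [if_pos h]
    have : (2 * (Real.pi:ℂ) * Complex.I * (y:ℂ) ^ d) = ((2 * Real.pi * y ^ d : ℝ) : ℂ) * Complex.I := by
      push_cast; ring
    rw [this, Complex.norm_exp_ofReal_mul_I, mul_one, Real.norm_eq_abs]
  · rw [if_neg (not_lt.2 h), norm_zero, mul_zero]; positivity

lemma psiK_integrable (d : ℕ) {ρ : ℝ → ℝ} (hρc : Continuous ρ)
    (hρs : ∀ t, ρ t ≠ 0 → |t| ≤ 2) (k : ℤ) : Integrable (psiK d ρ k) := by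
  have hφc : Continuous fun y : ℝ => |(2:ℝ) ^ (-k) * ρ ((2:ℝ) ^ (-k) * y)| :=
    (continuous_const.mul (hρc.comp (continuous_const.mul continuous_id))).abs
  have h2 : (0:ℝ) < 2 ^ (-k) := zpow_pos two_pos _
  have hφs : HasCompactSupport fun y : ℝ => |(2:ℝ) ^ (-k) * ρ ((2:ℝ) ^ (-k) * y)| := by
    apply HasCompactSupport.intro (isCompact_Icc (a := -(2 * 2 ^ k)) (b := 2 * 2 ^ k))
    intro x hx
    simp only [abs_eq_zero, mul_eq_zero]
    right
    by_contra hne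
    have := hρs _ hne
    rw [abs_mul, abs_of_pos h2] at this
    have hxle : |x| ≤ 2 * 2 ^ k := by
      have h2k : (2:ℝ) ^ (-k) = ((2:ℝ) ^ k)⁻¹ := by rw [zpow_neg]
      rw [h2k] at this
      have hk : (0:ℝ) < 2 ^ k := zpow_pos two_pos _
      calc |x| = (2:ℝ) ^ k * (((2:ℝ)^k)⁻¹ * |x|) := by field_simp
        _ ≤ (2:ℝ) ^ k * 2 := by apply mul_le_mul_of_nonneg_left this hk.le
        _ = 2 * 2 ^ k := by ring
    exact hx (by rw [mem_Icc]; constructor <;> [linarith [abs_le.1 hxle |>.1]; linarith [abs_le.1 hxle |>.2]])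
  have hφi : Integrable fun y : ℝ => |(2:ℝ) ^ (-k) * ρ ((2:ℝ) ^ (-k) * y)| :=
    hφc.integrable_of_hasCompactSupport hφs
  exact hφi.mono' ((psiK_measurable d hρc k).aestronglyMeasurable)
    (Filter.Eventually.of_forall (psiK_norm_le d ρ k))


section CZ
variable {K : ℝ} {I0 : ℤ × ℤ} {f : ℝ → ℝ} {𝓑 : Set (ℤ × ℤ)}

lemma cz_f_meas (h : CZsetup K I0 f 𝓑) : Measurable f := h.1
lemma cz_f_nonneg (h : CZsetup K I0 f 𝓑) : ∀ x, 0 ≤ f x := h.2.1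

lemma cz_setIntegral_abs (h : CZsetup K I0 f 𝓑) (s : Set ℝ) :
    ∫ x in s, |f x| = ∫ x in s, f x := by
  apply integral_congr_ae
  filter_upwards with x
  exact abs_of_nonneg (h.2.1 x)

lemma cz_f_integrable (h : CZsetup K I0 f 𝓑) : Integrable f := by
  obtain ⟨M, hM⟩ := h.2.2.1
  have hf_eq : f = Set.indicator (dyad I0) f := by
    funext x
    by_cases hx : x ∈ dyad I0
    · rw [Set.indicator_of_mem hx]
    · rw [Set.indicator_of_notMem hx, h.2.2.2.1 x hx]
  rw [hf_eq]
  rw [integrable_indicator_iff (dyad_measurable I0)]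
  have hvol : volume (dyad I0) < ⊤ := by rw [dyad_volume]; exact ENNReal.ofReal_lt_top
  have hconst : IntegrableOn (fun _ : ℝ => M) (dyad I0) volume :=
    integrableOn_const hvol.ne
  apply Integrable.mono' hconst (h.1.aestronglyMeasurable.restrict)
  filter_upwards with x
  rw [Real.norm_eq_abs, abs_of_nonneg (h.2.1 x)]
  exact hM x

lemma cz_integral_f (h : CZsetup K I0 f 𝓑) : ∫ x, f x = (2:ℝ) ^ I0.1 := by
  have h1 : avgD f I0 = 1 := h.2.2.2.2.1
  rw [avgD, cz_setIntegral_abs h] at h1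
  have h2 : (0:ℝ) < 2 ^ I0.1 := zpow_pos' I0.1
  have h3 : ∫ x in dyad I0, f x = 2 ^ I0.1 := by
    have : (2:ℝ) ^ (-I0.1) = ((2:ℝ) ^ I0.1)⁻¹ := by rw [zpow_neg]
    rw [this] at h1
    field_simp at h1
    linarith
  have hf_eq : f = Set.indicator (dyad I0) f := by
    funext x
    by_cases hx : x ∈ dyad I0
    · rw [Set.indicator_of_mem hx]
    · rw [Set.indicator_of_notMem hx, h.2.2.2.1 x hx]
  calc ∫ x, f x = ∫ x, Set.indicator (dyad I0) f x := by rw [← hf_eq]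
    _ = ∫ x in dyad I0, f x := integral_indicator (dyad_measurable I0)
    _ = 2 ^ I0.1 := h3

lemma cz_disjoint (h : CZsetup K I0 f 𝓑) {J J' : ℤ × ℤ} (hJ : J ∈ 𝓑) (hJ' : J' ∈ 𝓑)
    (hne : J ≠ J') : dyad J ∩ dyad J' = ∅ := by
  rcases dyad_nested_or_disjoint J J' with hs | hs | hs
  · exfalso
    have hss : dyad J ⊂ dyad J' := ssubset_of_subset_of_ne hs (fun he => hne (dyad_inj he))
    have := h.2.2.2.2.2.2.1 J hJ J' hss (h.2.2.2.2.2.1 J' hJ').1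
    exact absurd this (not_le.2 (h.2.2.2.2.2.1 J' hJ').2)
  · exfalso
    have hss : dyad J' ⊂ dyad J := ssubset_of_subset_of_ne hs (fun he => hne.symm (dyad_inj he))
    have := h.2.2.2.2.2.2.1 J' hJ' J hss (h.2.2.2.2.2.1 J hJ).1
    exact absurd this (not_le.2 (h.2.2.2.2.2.1 J hJ).2)
  · exact hs

lemma cz_J_bound (h : CZsetup K I0 f 𝓑) (hK : 4 < K) {J : ℤ × ℤ} (hJ : J ∈ 𝓑) :
    ∫ x in dyad J, f x ≤ 2 * K * 2 ^ J.1 := by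
  set P : ℤ × ℤ := (J.1 + 1, J.2 / 2) with hP
  have hss : dyad J ⊂ dyad P := dyad_ssubset_parent J
  have hJI : dyad J ⊆ dyad I0 := (h.2.2.2.2.2.1 J hJ).1
  have hfi := cz_f_integrable h
  have hmono : ∀ (s t : Set ℝ), s ⊆ t → MeasurableSet t → ∫ x in s, f x ≤ ∫ x in t, f x := by
    intro s t hst hmt
    apply setIntegral_mono_set hfi.integrableOn
    · filter_upwards with x; exact h.2.1 x
    · exact HasSubset.Subset.eventuallyLE hst
  have hPvol : (2:ℝ) ^ P.1 = 2 * 2 ^ J.1 := by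
    rw [hP]; rw [zpow_add_one₀ (two_ne_zero : (2:ℝ) ≠ 0)]; ring
  by_cases hPI : dyad P ⊆ dyad I0
  · have havg : avgD f P ≤ K := h.2.2.2.2.2.2.1 J hJ P hss hPI
    rw [avgD, cz_setIntegral_abs h] at havg
    have h2 : (0:ℝ) < 2 ^ P.1 := zpow_pos' P.1
    have hiP : ∫ x in dyad P, f x ≤ K * 2 ^ P.1 := by
      have : (2:ℝ) ^ (-P.1) = ((2:ℝ) ^ P.1)⁻¹ := by rw [zpow_neg]
      rw [this] at havg
      calc ∫ x in dyad P, f x = 2 ^ P.1 * (((2:ℝ) ^ P.1)⁻¹ * ∫ x in dyad P, f x) := by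
            field_simp
        _ ≤ 2 ^ P.1 * K := mul_le_mul_of_nonneg_left havg h2.le
        _ = K * 2 ^ P.1 := by ring
    calc ∫ x in dyad J, f x ≤ ∫ x in dyad P, f x :=
          hmono _ _ hss.subset (dyad_measurable P)
      _ ≤ K * 2 ^ P.1 := hiP
      _ = 2 * K * 2 ^ J.1 := by rw [hPvol]; ring
  · have hI0P : dyad I0 ⊆ dyad P := by
      rcases dyad_nested_or_disjoint P I0 with hs | hs | hs
      · exact absurd hs hPI
      · exact hs
      · exfalso
        obtain ⟨x, hx⟩ := dyad_nonempty J
        have : x ∈ dyad P ∩ dyad I0 := ⟨hss.subset hx, hJI hx⟩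
        rw [hs] at this
        exact this
    have hvI : (2:ℝ) ^ I0.1 ≤ 2 ^ P.1 := dyad_vol_mono hI0P
    have hfI0 : ∫ x in dyad J, f x ≤ ∫ x, f x := by
      have : ∫ x, f x = ∫ x in (Set.univ : Set ℝ), f x := by rw [setIntegral_univ]
      rw [this]
      exact hmono _ _ (Set.subset_univ _) MeasurableSet.univ
    rw [cz_integral_f h] at hfI0
    have h2J : (0:ℝ) < 2 ^ J.1 := zpow_pos' J.1
    calc ∫ x in dyad J, f x ≤ (2:ℝ) ^ I0.1 := hfI0
      _ ≤ 2 ^ P.1 := hvI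
      _ = 2 * 2 ^ J.1 := hPvol
      _ ≤ 2 * K * 2 ^ J.1 := by nlinarith

end CZ


section BF
variable {K : ℝ} {I0 : ℤ × ℤ} {f : ℝ → ℝ} {𝓑 : Set (ℤ × ℤ)} {k0 k : ℤ}

lemma bucket_measurableSet (k0 : ℤ) (𝓑 : Set (ℤ × ℤ)) (k : ℤ) :
    MeasurableSet (⋃ J ∈ {J ∈ 𝓑 | max k0 J.1 = k}, dyad J) :=
  MeasurableSet.biUnion (Set.to_countable _) (fun J _ => dyad_measurable J)

lemma Bfun_nonneg (h : CZsetup K I0 f 𝓑) (k0 k : ℤ) : ∀ x, 0 ≤ Bfun k0 𝓑 f k x :=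
  fun x => Set.indicator_nonneg (fun y _ => h.2.1 y) x

lemma Bfun_le_f (h : CZsetup K I0 f 𝓑) (k0 k : ℤ) : ∀ x, Bfun k0 𝓑 f k x ≤ f x :=
  fun x => Set.indicator_le_self' (fun y _ => h.2.1 y) x

lemma Bfun_measurable (h : CZsetup K I0 f 𝓑) (k0 k : ℤ) : Measurable (Bfun k0 𝓑 f k) :=
  h.1.indicator (bucket_measurableSet k0 𝓑 k)

lemma Bfun_integrable (h : CZsetup K I0 f 𝓑) (k0 k : ℤ) : Integrable (Bfun k0 𝓑 f k) := by
  apply (cz_f_integrable h).mono' (Bfun_measurable h k0 k).aestronglyMeasurable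
  filter_upwards with x
  rw [Real.norm_eq_abs, abs_of_nonneg (Bfun_nonneg h k0 k x)]
  exact Bfun_le_f h k0 k x

/-- Sums of `Bfun` over distinct scales are bounded by `f` pointwise. -/
lemma Bfun_sum_le (h : CZsetup K I0 f 𝓑) (k0 : ℤ) (T : Finset ℤ) (x : ℝ) :
    ∑ k ∈ T, Bfun k0 𝓑 f k x ≤ f x := by
  by_cases hex : ∃ k ∈ T, Bfun k0 𝓑 f k x ≠ 0
  · obtain ⟨k₁, hk₁, hne₁⟩ := hex
    have hmem : ∀ k, Bfun k0 𝓑 f k x ≠ 0 →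
        ∃ J ∈ 𝓑, max k0 J.1 = k ∧ x ∈ dyad J := by
      intro k hne
      have hx := Set.mem_of_indicator_ne_zero hne
      simp only [Set.mem_iUnion, Set.mem_setOf_eq] at hx
      obtain ⟨J, ⟨hJB, hJk⟩, hxJ⟩ := hx
      exact ⟨J, hJB, hJk, hxJ⟩
    have hsum : ∑ k ∈ T, Bfun k0 𝓑 f k x = Bfun k0 𝓑 f k₁ x := by
      apply Finset.sum_eq_single_of_mem k₁ hk₁
      intro b _ hb
      by_contra hbne
      obtain ⟨J, hJB, hJk, hxJ⟩ := hmem b hbne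
      obtain ⟨J', hJ'B, hJ'k, hxJ'⟩ := hmem k₁ hne₁
      have hJne : J ≠ J' := fun he => hb (by rw [← hJk, he, hJ'k])
      have := cz_disjoint h hJB hJ'B hJne
      exact absurd (Set.mem_inter hxJ hxJ') (by rw [this]; exact Set.notMem_empty x)
    rw [hsum]
    exact Set.indicator_le_self' (fun y _ => h.2.1 y) x
  · push_neg at hex
    rw [Finset.sum_eq_zero hex]
    exact h.2.1 x

/-- The key local estimate: the integral of `B_k` over any interval of length one
is at most `6 K 2^k`. -/
lemma Bfun_icc_bound (h : CZsetup K I0 f 𝓑) (hK : 4 < K) (k0 : ℤ) {k : ℤ} (hk : 0 ≤ k)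
    (z : ℝ) : ∫ y in Set.Icc (z - 1/2) (z + 1/2), Bfun k0 𝓑 f k y ≤ 6 * K * 2 ^ k := by
  classical
  set S : Set (ℤ × ℤ) := {J ∈ 𝓑 | max k0 J.1 = k} with hS
  set Icc1 : Set ℝ := Set.Icc (z - 1/2) (z + 1/2) with hIcc1
  set 𝓙 : Set (ℤ × ℤ) := {J ∈ S | (dyad J ∩ Icc1).Nonempty} with h𝓙
  set V : Set ℝ := ⋃ J ∈ 𝓙, dyad J with hV
  have h𝓙sub : 𝓙 ⊆ 𝓑 := fun J hJ => hJ.1.1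
  have hVm : MeasurableSet V :=
    MeasurableSet.biUnion (Set.to_countable _) (fun J _ => dyad_measurable J)
  have hfi := cz_f_integrable h
  -- scale bound for members of 𝓙
  have hscale : ∀ J ∈ 𝓙, (2:ℝ) ^ J.1 ≤ 2 ^ k := by
    intro J hJ
    have : J.1 ≤ k := by
      have := hJ.1.2
      have h2 := le_max_right k0 J.1
      omega
    exact zpow_le_zpow_right₀ one_le_two this
  -- members of 𝓙 lie in the enlarged interval W
  set W : Set ℝ := Set.Icc (z - 1/2 - 2 ^ k) (z + 1/2 + 2 ^ k) with hW
  have hJW : ∀ J ∈ 𝓙, dyad J ⊆ W := by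
    intro J hJ x hx
    obtain ⟨w, hwJ, hwI⟩ := hJ.2
    have h1 := (mem_Ico.1 hx).1
    have h2 := (mem_Ico.1 hx).2
    have h3 := (mem_Ico.1 hwJ).1
    have h4 := (mem_Ico.1 hwJ).2
    have h5 := (mem_Icc.1 hwI).1
    have h6 := (mem_Icc.1 hwI).2
    have hlen : (2:ℝ) ^ J.1 * ((J.2:ℝ) + 1) - 2 ^ J.1 * J.2 = 2 ^ J.1 := by ring
    have hs := hscale J hJ
    rw [mem_Icc]
    constructor <;> nlinarith
  -- step 1 : reduce to the integral over V
  have step1 : ∫ y in Icc1, Bfun k0 𝓑 f k y ≤ ∫ y in V, f y := by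
    rw [← integral_indicator measurableSet_Icc, ← integral_indicator hVm]
    apply integral_mono ((Bfun_integrable h k0 k).indicator measurableSet_Icc)
      (hfi.indicator hVm)
    intro x
    by_cases hx1 : x ∈ Icc1
    · rw [Set.indicator_of_mem hx1]
      by_cases hx2 : x ∈ ⋃ J ∈ S, dyad J
      · have hxV : x ∈ V := by
          show x ∈ ⋃ J ∈ 𝓙, dyad J
          simp only [Set.mem_iUnion, exists_prop] at hx2 ⊢
          obtain ⟨J, hJS, hxJ⟩ := hx2
          exact ⟨J, ⟨hJS, ⟨x, hxJ, hx1⟩⟩, hxJ⟩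
        rw [Set.indicator_of_mem hxV]
        exact Set.indicator_le_self' (fun y _ => h.2.1 y) x
      · rw [Bfun, Set.indicator_of_notMem hx2]
        exact Set.indicator_nonneg (fun y _ => h.2.1 y) x
    · rw [Set.indicator_of_notMem hx1]
      exact Set.indicator_nonneg (fun y _ => h.2.1 y) x
  -- step 2 : decompose V
  have hVU : V = ⋃ J : 𝓙, dyad J.val := by rw [hV, Set.biUnion_eq_iUnion]
  have hpd : Pairwise (Function.onFun Disjoint fun J : 𝓙 => dyad J.val) := by
    intro i j hij
    have : i.val ≠ j.val := fun he => hij (Subtype.coe_injective he)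
    rw [Function.onFun, Set.disjoint_iff_inter_eq_empty]
    exact cz_disjoint h (h𝓙sub i.2) (h𝓙sub j.2) this
  have step2 : ∫ y in V, f y = ∑' J : 𝓙, ∫ y in dyad J.val, f y := by
    rw [hVU]
    exact integral_iUnion (fun J => dyad_measurable _) hpd hfi.integrableOn
  -- volume facts
  have hvolV : volume (⋃ J : 𝓙, dyad J.val) = ∑' J : 𝓙, volume (dyad J.val) :=
    measure_iUnion hpd (fun J => dyad_measurable _)
  have hVW : volume V ≤ ENNReal.ofReal (1 + 2 * 2 ^ k) := by
    have : V ⊆ W := by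
      intro x hx
      simp only [hV, Set.mem_iUnion] at hx
      obtain ⟨J, hJ, hxJ⟩ := hx
      exact hJW J hJ hxJ
    calc volume V ≤ volume W := measure_mono this
      _ = ENNReal.ofReal (1 + 2 * 2 ^ k) := by
          rw [hW, Real.volume_Icc]; congr 1; ring
  have hsumvol : ∑' J : 𝓙, volume (dyad J.val) ≠ ⊤ := by
    rw [← hvolV, ← hVU]
    exact ne_top_of_le_ne_top ENNReal.ofReal_ne_top hVW
  have hsum2 : Summable fun J : 𝓙 => (volume (dyad J.val)).toReal :=
    ENNReal.summable_toReal hsumvol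
  have hterm : ∀ J : 𝓙, ∫ y in dyad J.val, f y ≤ 2 * K * (volume (dyad J.val)).toReal := by
    intro J
    rw [dyad_volume, ENNReal.toReal_ofReal (zpow_pos' _).le]
    exact cz_J_bound h hK (h𝓙sub J.2)
  have hsum1 : Summable fun J : 𝓙 => ∫ y in dyad J.val, f y := by
    apply Summable.of_nonneg_of_le
      (fun J => setIntegral_nonneg (dyad_measurable _) (fun x _ => h.2.1 x)) hterm
    exact hsum2.mul_left (2 * K)
  have step3 : ∑' J : 𝓙, ∫ y in dyad J.val, f y ≤ 2 * K * ((volume V).toReal) := by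
    calc ∑' J : 𝓙, ∫ y in dyad J.val, f y
        ≤ ∑' J : 𝓙, 2 * K * (volume (dyad J.val)).toReal :=
          Summable.tsum_le_tsum hterm hsum1 (hsum2.mul_left (2 * K))
      _ = 2 * K * ∑' J : 𝓙, (volume (dyad J.val)).toReal := by rw [tsum_mul_left]
      _ = 2 * K * ((volume V).toReal) := by
          congr 1
          rw [hVU, hvolV, ENNReal.tsum_toReal_eq (fun J => by
            rw [dyad_volume]; exact ENNReal.ofReal_ne_top)]
  have hVtoReal : (volume V).toReal ≤ 1 + 2 * 2 ^ k := by
    calc (volume V).toReal ≤ (ENNReal.ofReal (1 + 2 * 2 ^ k)).toReal :=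
          ENNReal.toReal_mono ENNReal.ofReal_ne_top hVW
      _ = 1 + 2 * 2 ^ k := ENNReal.toReal_ofReal (by positivity)
  have h1le : (1:ℝ) ≤ 2 ^ k := by
    have := zpow_le_zpow_right₀ (one_le_two : (1:ℝ) ≤ 2) hk
    rwa [zpow_zero] at this
  calc ∫ y in Icc1, Bfun k0 𝓑 f k y ≤ ∫ y in V, f y := step1
    _ = ∑' J : 𝓙, ∫ y in dyad J.val, f y := step2
    _ ≤ 2 * K * ((volume V).toReal) := step3
    _ ≤ 2 * K * (1 + 2 * 2 ^ k) := by nlinarith [(volume V).toReal, hVtoReal]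
    _ ≤ 6 * K * 2 ^ k := by nlinarith

end BF


section Inner

/-- The localized average as a convolution-type integral, for measurability. -/
lemma inner_eq (B : ℝ → ℝ) (p : ℤ × ℤ) (z : ℝ) :
    ∫ y in dyadMid p ∩ Set.Icc (z - 1/2) (z + 1/2), B y =
      ∫ y, Set.indicator (dyadMid p) B y *
        Set.indicator (Set.Icc (-(1/2) : ℝ) (1/2)) (fun _ => (1:ℝ)) (z - y) := by
  rw [← integral_indicator ((show MeasurableSet (dyadMid p) from measurableSet_Ico).inter
    measurableSet_Icc)]
  congr 1
  funext y
  by_cases h1 : y ∈ dyadMid p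
  · by_cases h2 : y ∈ Set.Icc (z - 1/2) (z + 1/2)
    · have h3 : z - y ∈ Set.Icc (-(1/2):ℝ) (1/2) := by
        rw [mem_Icc] at h2 ⊢; constructor <;> linarith [h2.1, h2.2]
      rw [Set.indicator_of_mem (Set.mem_inter h1 h2), Set.indicator_of_mem h1, Set.indicator_of_mem h3,
        mul_one]
    · have h3 : z - y ∉ Set.Icc (-(1/2):ℝ) (1/2) := by
        rw [mem_Icc] at h2 ⊢
        intro hc
        exact h2 ⟨by linarith [hc.2], by linarith [hc.1]⟩
      rw [Set.indicator_of_notMem (fun hc => h2 hc.2), Set.indicator_of_notMem h3, mul_zero]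
  · rw [Set.indicator_of_notMem (fun hc => h1 hc.1), Set.indicator_of_notMem h1, zero_mul]

lemma inner_measurable {B : ℝ → ℝ} (hB : Measurable B) (p : ℤ × ℤ) :
    Measurable fun z => ∫ y in dyadMid p ∩ Set.Icc (z - 1/2) (z + 1/2), B y := by
  have : (fun z => ∫ y in dyadMid p ∩ Set.Icc (z - 1/2) (z + 1/2), B y) =
      fun z => ∫ y, (fun q : ℝ × ℝ => Set.indicator (dyadMid p) B q.2 *
        Set.indicator (Set.Icc (-(1/2) : ℝ) (1/2)) (fun _ => (1:ℝ)) (q.1 - q.2)) (z, y) := by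
    funext z; exact inner_eq B p z
  rw [this]
  apply StronglyMeasurable.measurable
  exact MeasureTheory.StronglyMeasurable.integral_prod_right'
    (f := fun q : ℝ × ℝ => Set.indicator (dyadMid p) B q.2 *
      Set.indicator (Set.Icc (-(1/2) : ℝ) (1/2)) (fun _ => (1:ℝ)) (q.1 - q.2))
    (Measurable.stronglyMeasurable
      ((((hB.indicator (show MeasurableSet (dyadMid p) from measurableSet_Ico)).comp
        measurable_snd).mul
      ((measurable_const.indicator measurableSet_Icc).comp
        (measurable_fst.sub measurable_snd)))))

lemma inner_nonneg {B : ℝ → ℝ} (hB0 : ∀ x, 0 ≤ B x) (p : ℤ × ℤ) (z : ℝ) :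
    0 ≤ ∫ y in dyadMid p ∩ Set.Icc (z - 1/2) (z + 1/2), B y :=
  setIntegral_nonneg ((show MeasurableSet (dyadMid p) from measurableSet_Ico).inter
    measurableSet_Icc) (fun x _ => hB0 x)

lemma inner_le_icc {B : ℝ → ℝ} (hBi : Integrable B) (hB0 : ∀ x, 0 ≤ B x) (p : ℤ × ℤ)
    (z : ℝ) : ∫ y in dyadMid p ∩ Set.Icc (z - 1/2) (z + 1/2), B y ≤
      ∫ y in Set.Icc (z - 1/2) (z + 1/2), B y := by
  apply setIntegral_mono_set hBi.integrableOn
  · filter_upwards with x; exact hB0 x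
  · exact HasSubset.Subset.eventuallyLE Set.inter_subset_right

end Inner


section Key

/-- The main `T T^*` duality estimate for a single interval. -/
lemma key_lemma (d : ℕ) {ρ : ℝ → ℝ} (hρc : Continuous ρ)
    (hρs : ∀ t, ρ t ≠ 0 → |t| ≤ 2) (p : ℤ × ℤ) (B : ℝ → ℝ) (hBm : Measurable B)
    (hB0 : ∀ x, 0 ≤ B x) (M : ℝ) (hBM : ∀ x, B x ≤ M)
    (ub : ℝ → ℝ) (hBub : Integrable (fun z => B z * ub z))
    (hyp : ∀ x, ‖TIstar d ρ p (TI d ρ p (fun y => ((B y : ℝ) : ℂ))) x‖ ≤ ub x) :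
    ∫ x, ‖TI d ρ p (fun y => ((B y : ℝ) : ℂ)) x‖ ^ 2 ≤ ∫ z, B z * ub z := by
  have hM0 : 0 ≤ M := le_trans (hB0 0) (hBM 0)
  set ψ : ℝ → ℂ := psiK d ρ (p.1 - 2) with hψ
  have hψm : Measurable ψ := psiK_measurable d hρc _
  have hψi : Integrable ψ := psiK_integrable d hρc hρs _
  set G : ℝ → ℂ := Set.indicator (dyadMid p) (fun y => ((B y : ℝ) : ℂ)) with hG
  have hMidm : MeasurableSet (dyadMid p) := measurableSet_Ico
  have hGm : Measurable G := (Complex.measurable_ofReal.comp hBm).indicator hMidm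
  have hGb : ∀ z, ‖G z‖ ≤ M := by
    intro z
    by_cases hz : z ∈ dyadMid p
    · rw [hG, Set.indicator_of_mem hz, Complex.norm_real, Real.norm_eq_abs,
        abs_of_nonneg (hB0 z)]
      exact hBM z
    · rw [hG, Set.indicator_of_notMem hz, norm_zero]; exact hM0
  have hGi : Integrable G := by
    have hvol : volume (dyadMid p) < ⊤ := by
      apply lt_of_le_of_lt (measure_mono (dyadMid_subset p))
      rw [dyad_volume]; exact ENNReal.ofReal_lt_top
    have hconst : Integrable (Set.indicator (dyadMid p) fun _ : ℝ => M) := by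
      rw [integrable_indicator_iff hMidm]
      exact integrableOn_const hvol.ne
    apply hconst.mono' hGm.aestronglyMeasurable
    filter_upwards with z
    by_cases hz : z ∈ dyadMid p
    · rw [Set.indicator_of_mem hz]; exact hGb z
    · simp only [hG, Set.indicator_of_notMem hz, norm_zero, le_refl]
  set h : ℝ → ℂ := TI d ρ p (fun y => ((B y : ℝ) : ℂ)) with hh
  have hdef : ∀ x, h x = ∫ y, ψ y * G (x - y) := fun x => rfl
  -- measurability and boundedness of h
  have hhm : StronglyMeasurable h := by
    have : h = fun x => ∫ y, (fun q : ℝ × ℝ => ψ q.2 * G (q.1 - q.2)) (x, y) := by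
      funext x; exact hdef x
    rw [this]
    exact MeasureTheory.StronglyMeasurable.integral_prod_right'
      (f := fun q : ℝ × ℝ => ψ q.2 * G (q.1 - q.2))
      (Measurable.stronglyMeasurable
        ((hψm.comp measurable_snd).mul (hGm.comp (measurable_fst.sub measurable_snd))))
  set Cψ : ℝ := ∫ y, ‖ψ y‖ with hCψ
  have hhb : ∀ x, ‖h x‖ ≤ Cψ * M := by
    intro x
    rw [hdef x]
    have : ∀ y, ‖ψ y * G (x - y)‖ ≤ ‖ψ y‖ * M := by
      intro y
      rw [norm_mul]
      exact mul_le_mul_of_nonneg_left (hGb _) (norm_nonneg _)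
    calc ‖∫ y, ψ y * G (x - y)‖ ≤ ∫ y, ‖ψ y‖ * M :=
          norm_integral_le_of_norm_le (hψi.norm.mul_const M)
            (Filter.Eventually.of_forall this)
      _ = Cψ * M := by rw [integral_mul_const]
  -- product integrability for the two Fubini swaps
  have hbase1 : Integrable (fun q : ℝ × ℝ => ψ q.2 * G (q.1 - q.2))
      (volume.prod volume) := by
    have := hψi.convolution_integrand (ContinuousLinearMap.mul ℂ ℂ) hGi
    exact this
  have hQ1 : Integrable (fun q : ℝ × ℝ =>
      (starRingEnd ℂ) (h q.1) * (ψ q.2 * G (q.1 - q.2))) (volume.prod volume) := by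
    apply hbase1.bdd_mul
    · apply Measurable.aestronglyMeasurable
      simp only [starRingEnd_apply]
      exact continuous_star.measurable.comp (hhm.measurable.comp measurable_fst)
    · exact Filter.Eventually.of_forall (fun q => by rw [RCLike.norm_conj]; exact hhb _)
  have hbase2 : Integrable (fun q : ℝ × ℝ => ψ q.1 * G q.2) (volume.prod volume) :=
    hψi.mul_prod hGi
  have hQ2 : Integrable (fun q : ℝ × ℝ =>
      ψ q.1 * ((starRingEnd ℂ) (h (q.2 + q.1)) * G q.2)) (volume.prod volume) := by
    have heq : (fun q : ℝ × ℝ => ψ q.1 * ((starRingEnd ℂ) (h (q.2 + q.1)) * G q.2)) =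
        fun q : ℝ × ℝ => (starRingEnd ℂ) (h (q.2 + q.1)) * (ψ q.1 * G q.2) := by
      funext q; ring
    rw [heq]
    apply hbase2.bdd_mul
    · apply Measurable.aestronglyMeasurable
      simp only [starRingEnd_apply]
      exact continuous_star.measurable.comp
        (hhm.measurable.comp (measurable_snd.add measurable_fst))
    · exact Filter.Eventually.of_forall (fun q => by rw [RCLike.norm_conj]; exact hhb _)
  -- the adjoint identity via Fubini
  set A : ℝ → ℂ := fun z => ∫ y, (starRingEnd ℂ) (ψ y) * h (z + y) with hA
  have hS : ∫ x, (starRingEnd ℂ) (h x) * h x = ∫ z, (starRingEnd ℂ) (A z) * G z := by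
    have c1 : ∫ x, (starRingEnd ℂ) (h x) * h x =
        ∫ x, ∫ y, (starRingEnd ℂ) (h x) * (ψ y * G (x - y)) := by
      congr 1; funext x
      rw [integral_const_mul]
      exact congrArg _ (hdef x)
    have c2 : ∫ x, ∫ y, (starRingEnd ℂ) (h x) * (ψ y * G (x - y)) =
        ∫ y, ∫ x, (starRingEnd ℂ) (h x) * (ψ y * G (x - y)) :=
      integral_integral_swap hQ1
    have c3 : ∀ y : ℝ, ∫ x, (starRingEnd ℂ) (h x) * (ψ y * G (x - y)) =
        ψ y * ∫ z, (starRingEnd ℂ) (h (z + y)) * G z := by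
      intro y
      have e1 : ∫ x, (starRingEnd ℂ) (h x) * (ψ y * G (x - y)) =
          ∫ x, ψ y * ((starRingEnd ℂ) (h x) * G (x - y)) := by
        congr 1; funext x; ring
      have e2 : ∫ x, (starRingEnd ℂ) (h x) * G (x - y) =
          ∫ z, (starRingEnd ℂ) (h (z + y)) * G z := by
        have : ∀ x : ℝ, (starRingEnd ℂ) (h x) * G (x - y) =
            (fun t => (starRingEnd ℂ) (h (t + y)) * G t) (x - y) := by
          intro x; simp only [sub_add_cancel]
        calc ∫ x, (starRingEnd ℂ) (h x) * G (x - y)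
            = ∫ x, (fun t => (starRingEnd ℂ) (h (t + y)) * G t) (x - y) := by
              congr 1; funext x; exact this x
          _ = ∫ t, (starRingEnd ℂ) (h (t + y)) * G t :=
              integral_sub_right_eq_self (μ := volume)
                (fun t => (starRingEnd ℂ) (h (t + y)) * G t) y
      rw [e1, integral_const_mul, e2]
    have c4 : ∫ y, ψ y * ∫ z, (starRingEnd ℂ) (h (z + y)) * G z =
        ∫ y, ∫ z, ψ y * ((starRingEnd ℂ) (h (z + y)) * G z) := by
      congr 1; funext y; rw [integral_const_mul]
    have c5 : ∫ y, ∫ z, ψ y * ((starRingEnd ℂ) (h (z + y)) * G z) =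
        ∫ z, ∫ y, ψ y * ((starRingEnd ℂ) (h (z + y)) * G z) :=
      integral_integral_swap hQ2
    have c6 : ∀ z : ℝ, ∫ y, ψ y * ((starRingEnd ℂ) (h (z + y)) * G z) =
        (starRingEnd ℂ) (A z) * G z := by
      intro z
      have e1 : ∫ y, ψ y * ((starRingEnd ℂ) (h (z + y)) * G z) =
          (∫ y, ψ y * (starRingEnd ℂ) (h (z + y))) * G z := by
        rw [← integral_mul_const]
        congr 1; funext y; ring
      have e2 : ∫ y, ψ y * (starRingEnd ℂ) (h (z + y)) = (starRingEnd ℂ) (A z) := by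
        rw [hA]
        rw [← integral_conj]
        congr 1; funext y
        rw [map_mul, Complex.conj_conj]
      rw [e1, e2]
    calc ∫ x, (starRingEnd ℂ) (h x) * h x
        = ∫ y, ∫ x, (starRingEnd ℂ) (h x) * (ψ y * G (x - y)) := by rw [c1, c2]
      _ = ∫ y, ψ y * ∫ z, (starRingEnd ℂ) (h (z + y)) * G z := by
          congr 1; funext y; exact c3 y
      _ = ∫ z, ∫ y, ψ y * ((starRingEnd ℂ) (h (z + y)) * G z) := by rw [c4, c5]
      _ = ∫ z, (starRingEnd ℂ) (A z) * G z := by congr 1; funext z; exact c6 z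
  -- real part identification
  have hre : ((∫ x, ‖h x‖ ^ 2 : ℝ) : ℂ) = ∫ x, (starRingEnd ℂ) (h x) * h x := by
    have h1 : ∫ x, ((‖h x‖ ^ 2 : ℝ) : ℂ) = ((∫ x, ‖h x‖ ^ 2 : ℝ) : ℂ) := integral_ofReal
    have h2 : ∫ x, ((‖h x‖ ^ 2 : ℝ) : ℂ) = ∫ x, (starRingEnd ℂ) (h x) * h x := by
      congr 1; funext x
      rw [RCLike.conj_mul]
      norm_cast
    rw [← h1, h2]
  have hTIstar : TIstar d ρ p h = Set.indicator (dyadMid p) A := rfl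
  have hnorm_eq : ∀ z, ‖(starRingEnd ℂ) (A z) * G z‖ = B z * ‖TIstar d ρ p h z‖ := by
    intro z
    rw [norm_mul, RCLike.norm_conj, hTIstar]
    by_cases hz : z ∈ dyadMid p
    · rw [hG, Set.indicator_of_mem hz, Set.indicator_of_mem hz, Complex.norm_real,
        Real.norm_eq_abs, abs_of_nonneg (hB0 z)]
      ring
    · simp only [hG, Set.indicator_of_notMem hz, norm_zero, mul_zero]
  calc ∫ x, ‖h x‖ ^ 2 = (((∫ x, ‖h x‖ ^ 2 : ℝ) : ℂ)).re := by rw [Complex.ofReal_re]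
    _ = (∫ x, (starRingEnd ℂ) (h x) * h x).re := by rw [hre]
    _ ≤ ‖∫ x, (starRingEnd ℂ) (h x) * h x‖ := Complex.re_le_norm _
    _ = ‖∫ z, (starRingEnd ℂ) (A z) * G z‖ := by rw [hS]
    _ ≤ ∫ z, ‖(starRingEnd ℂ) (A z) * G z‖ := norm_integral_le_integral_norm _
    _ = ∫ z, B z * ‖TIstar d ρ p h z‖ := by congr 1; funext z; exact hnorm_eq z
    _ ≤ ∫ z, B z * ub z := by
        apply integral_mono_of_nonneg
        · filter_upwards with z
          exact mul_nonneg (hB0 z) (norm_nonneg _)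
        · exact hBub
        · filter_upwards with z
          exact mul_le_mul_of_nonneg_left (hyp z) (hB0 z)

end Key


/-- Disjointness of middle thirds at a fixed scale: the localized averages sum up. -/
lemma inner_sum_le {B : ℝ → ℝ} (hBm : Measurable B) (hB0 : ∀ x, 0 ≤ B x)
    (hBi : Integrable B) (m : ℤ) (𝓕 : Finset (ℤ × ℤ)) (h𝓕 : ∀ p ∈ 𝓕, p.1 = m) (z : ℝ) :
    ∑ p ∈ 𝓕, ∫ y in dyadMid p ∩ Set.Icc (z - 1/2) (z + 1/2), B y ≤
      ∫ y in Set.Icc (z - 1/2) (z + 1/2), B y := by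
  classical
  have hms : ∀ p : ℤ × ℤ, MeasurableSet (dyadMid p ∩ Set.Icc (z - 1/2) (z + 1/2)) :=
    fun p => (show MeasurableSet (dyadMid p) from measurableSet_Ico).inter measurableSet_Icc
  have hrw : ∀ p ∈ 𝓕, ∫ y in dyadMid p ∩ Set.Icc (z - 1/2) (z + 1/2), B y =
      ∫ y, Set.indicator (dyadMid p ∩ Set.Icc (z - 1/2) (z + 1/2)) B y :=
    fun p _ => (integral_indicator (hms p)).symm
  rw [Finset.sum_congr rfl hrw, ← integral_finset_sum 𝓕
    (fun p _ => hBi.indicator (hms p)), ← integral_indicator measurableSet_Icc]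
  apply integral_mono (integrable_finset_sum 𝓕 (fun p _ => hBi.indicator (hms p)))
    (hBi.indicator measurableSet_Icc)
  intro y
  simp only
  by_cases hex : ∃ p ∈ 𝓕, y ∈ dyadMid p
  · obtain ⟨p₀, hp₀, hyp₀⟩ := hex
    have hsum : ∑ p ∈ 𝓕, Set.indicator (dyadMid p ∩ Set.Icc (z - 1/2) (z + 1/2)) B y =
        Set.indicator (dyadMid p₀ ∩ Set.Icc (z - 1/2) (z + 1/2)) B y := by
      apply Finset.sum_eq_single_of_mem p₀ hp₀
      intro q hq hqne
      apply Set.indicator_of_notMem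
      intro hyq
      have hdisj := dyadMid_disjoint_same_scale ((h𝓕 q hq).trans (h𝓕 p₀ hp₀).symm) hqne
      have : y ∈ dyadMid q ∩ dyadMid p₀ := ⟨hyq.1, hyp₀⟩
      rw [hdisj] at this
      exact this
    rw [hsum]
    by_cases hy : y ∈ dyadMid p₀ ∩ Set.Icc (z - 1/2) (z + 1/2)
    · rw [Set.indicator_of_mem hy, Set.indicator_of_mem hy.2]
    · rw [Set.indicator_of_notMem hy]
      exact Set.indicator_nonneg (fun x _ => hB0 x) y
  · push_neg at hex
    rw [Finset.sum_eq_zero (fun p hp => Set.indicator_of_notMem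
      (fun hy => hex p hp hy.1) B)]
    exact Set.indicator_nonneg (fun x _ => hB0 x) y

/-- the square function estimate (display `e:D`): for a collection `𝓝` of
dyadic subintervals of `I₀`, each of scale `j(I) ≥ s + k₀` (where `|I| = 2^{j(I)+2}`)
satisfying the non-standard pointwise bound
`|T_I^* T_I B_{j(I)-s}| ≤ C₀ |I|⁻¹ (1_{[-1/2,1/2]} * (B_{j(I)-s} 1_{I'}))`, one has
`Σ_{I ∈ 𝓝} ‖T_I B_{j(I)-s}‖₂² ≤ C 2^{-s} |I₀|`. -/
theorem stmt14 (d : ℕ) (hd : 2 ≤ d) (ρ : ℝ → ℝ) (hρ : rhoGood ρ)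
    (K C₀ : ℝ) (hK : 4 < K) (hC₀ : 0 < C₀) :
    ∃ k0 : ℤ, 1 ≤ k0 ∧ ∃ C : ℝ, 0 < C ∧
      ∀ s : ℤ, 0 ≤ s →
        ∀ I0 : ℤ × ℤ, ∀ f : ℝ → ℝ, ∀ 𝓑 : Set (ℤ × ℤ), CZsetup K I0 f 𝓑 →
          ∀ 𝓝 : Finset (ℤ × ℤ),
            (∀ p ∈ 𝓝, dyad p ⊆ dyad I0 ∧ s + k0 ≤ p.1 - 2 ∧
              ∀ x : ℝ,
                ‖TIstar d ρ p
                    (TI d ρ p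
                      (fun y => ((Bfun k0 𝓑 f (p.1 - 2 - s) y : ℝ) : ℂ))) x‖ ≤
                  C₀ * (2:ℝ) ^ (-p.1) *
                    ∫ y in dyadMid p ∩ Set.Icc (x - 1/2) (x + 1/2),
                      Bfun k0 𝓑 f (p.1 - 2 - s) y) →
            (∑ p ∈ 𝓝, ∫ x : ℝ,
                ‖TI d ρ p (fun y => ((Bfun k0 𝓑 f (p.1 - 2 - s) y : ℝ) : ℂ)) x‖ ^ 2) ≤
              C * (2:ℝ) ^ (-s) * (2:ℝ) ^ I0.1 := by
  classical
  have hρc : Continuous ρ := hρ.1.continuous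
  have hρs : ∀ t, ρ t ≠ 0 → |t| ≤ 2 := fun t ht => (hρ.2.2.1 t ht).2
  have hKpos : (0:ℝ) < K := by linarith
  refine ⟨1, le_refl 1, 2 * K * C₀, by positivity, ?_⟩
  intro s hs I0 f 𝓑 hCZ 𝓝 h𝓝
  obtain ⟨M, hM⟩ := hCZ.2.2.1
  set Bf : ℤ → ℝ → ℝ := fun k => Bfun 1 𝓑 f k with hBfdef
  -- shorthand for the localized average
  set Inn : ℤ × ℤ → ℝ → ℝ := fun p z =>
    ∫ y in dyadMid p ∩ Set.Icc (z - 1/2) (z + 1/2), Bf (p.1 - 2 - s) y with hInn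
  -- integrability of the upper-bound integrand for each p ∈ 𝓝
  have hupper : ∀ p ∈ 𝓝, Integrable
      (fun z => Bf (p.1 - 2 - s) z * (C₀ * (2:ℝ) ^ (-p.1) * Inn p z)) := by
    intro p hp
    obtain ⟨-, hk, -⟩ := h𝓝 p hp
    have hk0 : (0:ℤ) ≤ p.1 - 2 - s := by omega
    set k : ℤ := p.1 - 2 - s
    have hc0 : (0:ℝ) ≤ C₀ * (2:ℝ) ^ (-p.1) := by positivity
    have hSbound : ∀ z, Inn p z ≤ 6 * K * 2 ^ k := by
      intro z
      calc Inn p z ≤ ∫ y in Set.Icc (z - 1/2) (z + 1/2), Bf k y :=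
            inner_le_icc (Bfun_integrable hCZ 1 k) (Bfun_nonneg hCZ 1 k) p z
        _ ≤ 6 * K * 2 ^ k := Bfun_icc_bound hCZ hK 1 hk0 z
    apply Integrable.mono'
      ((cz_f_integrable hCZ).const_mul (C₀ * (2:ℝ) ^ (-p.1) * (6 * K * 2 ^ k)))
      (((Bfun_measurable hCZ 1 k).mul
        ((inner_measurable (Bfun_measurable hCZ 1 k) p).const_mul
          (C₀ * (2:ℝ) ^ (-p.1)))).aestronglyMeasurable)
    filter_upwards with z
    have hB0z := Bfun_nonneg hCZ 1 k z
    have hI0z := inner_nonneg (Bfun_nonneg hCZ 1 k) p z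
    have hBfz := Bfun_le_f hCZ 1 k z
    have hfz := hCZ.2.1 z
    rw [Pi.mul_apply, Real.norm_eq_abs, abs_of_nonneg (by positivity)]
    have h1 : Bf k z * (C₀ * (2:ℝ) ^ (-p.1) * Inn p z) ≤
        Bf k z * (C₀ * (2:ℝ) ^ (-p.1) * (6 * K * 2 ^ k)) := by
      apply mul_le_mul_of_nonneg_left _ hB0z
      exact mul_le_mul_of_nonneg_left (hSbound z) hc0
    have h2 : Bf k z * (C₀ * (2:ℝ) ^ (-p.1) * (6 * K * 2 ^ k)) ≤
        C₀ * (2:ℝ) ^ (-p.1) * (6 * K * 2 ^ k) * f z := by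
      have := mul_le_mul_of_nonneg_left hBfz (by positivity :
        (0:ℝ) ≤ C₀ * (2:ℝ) ^ (-p.1) * (6 * K * 2 ^ k))
      nlinarith [this]
    linarith
  -- the single-interval estimate
  have hXR : ∀ p ∈ 𝓝, (∫ x : ℝ,
      ‖TI d ρ p (fun y => ((Bfun 1 𝓑 f (p.1 - 2 - s) y : ℝ) : ℂ)) x‖ ^ 2) ≤
      ∫ z, Bf (p.1 - 2 - s) z * (C₀ * (2:ℝ) ^ (-p.1) * Inn p z) := by
    intro p hp
    obtain ⟨-, -, hptw⟩ := h𝓝 p hp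
    exact key_lemma d hρc hρs p (Bf (p.1 - 2 - s)) (Bfun_measurable hCZ 1 _)
      (Bfun_nonneg hCZ 1 _) M (fun x => le_trans (Bfun_le_f hCZ 1 _ x) (hM x))
      (fun z => C₀ * (2:ℝ) ^ (-p.1) * Inn p z) (hupper p hp) hptw
  -- group by scale
  set T : Finset ℤ := 𝓝.image Prod.fst with hT
  have hgroup : ∑ p ∈ 𝓝, ∫ z, Bf (p.1 - 2 - s) z * (C₀ * (2:ℝ) ^ (-p.1) * Inn p z) =
      ∑ m ∈ T, ∑ p ∈ 𝓝.filter (fun p => p.1 = m),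
        ∫ z, Bf (p.1 - 2 - s) z * (C₀ * (2:ℝ) ^ (-p.1) * Inn p z) :=
    (Finset.sum_fiberwise_of_maps_to (fun p hp => Finset.mem_image_of_mem _ hp) _).symm
  -- the fixed-scale estimate
  have hfiber : ∀ m ∈ T, ∑ p ∈ 𝓝.filter (fun p => p.1 = m),
      ∫ z, Bf (p.1 - 2 - s) z * (C₀ * (2:ℝ) ^ (-p.1) * Inn p z) ≤
      (3/2) * K * C₀ * (2:ℝ) ^ (-s) * ∫ z, Bf (m - 2 - s) z := by
    intro m hm
    obtain ⟨p₁, hp₁, hp₁m⟩ := Finset.mem_image.1 hm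
    have hk : s + 1 ≤ m - 2 := by
      have := (h𝓝 p₁ hp₁).2.1; omega
    have hk0 : (0:ℤ) ≤ m - 2 - s := by omega
    set k : ℤ := m - 2 - s with hkdef
    set 𝓕 : Finset (ℤ × ℤ) := 𝓝.filter (fun p => p.1 = m) with h𝓕
    have h𝓕m : ∀ p ∈ 𝓕, p.1 = m := fun p hp => (Finset.mem_filter.1 hp).2
    have h𝓕N : ∀ p ∈ 𝓕, p ∈ 𝓝 := fun p hp => (Finset.mem_filter.1 hp).1
    have hBk_m : Measurable (Bf k) := Bfun_measurable hCZ 1 k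
    have hBk_0 : ∀ x, 0 ≤ Bf k x := Bfun_nonneg hCZ 1 k
    have hBk_i : Integrable (Bf k) := Bfun_integrable hCZ 1 k
    -- rewrite each summand at the common scale
    have hrw : ∀ p ∈ 𝓕, (∫ z, Bf (p.1 - 2 - s) z * (C₀ * (2:ℝ) ^ (-p.1) * Inn p z)) =
        ∫ z, Bf k z * (C₀ * (2:ℝ) ^ (-m) *
          ∫ y in dyadMid p ∩ Set.Icc (z - 1/2) (z + 1/2), Bf k y) := by
      intro p hp
      have hpm := h𝓕m p hp
      rw [hInn]
      simp only [hpm, hkdef]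
    rw [Finset.sum_congr rfl hrw]
    have hint : ∀ p ∈ 𝓕, Integrable (fun z => Bf k z * (C₀ * (2:ℝ) ^ (-m) *
        ∫ y in dyadMid p ∩ Set.Icc (z - 1/2) (z + 1/2), Bf k y)) := by
      intro p hp
      have := hupper p (h𝓕N p hp)
      have hpm := h𝓕m p hp
      simpa only [hInn, hpm, hkdef] using this
    rw [← integral_finset_sum 𝓕 hint]
    have hpoint : ∀ z, (∑ p ∈ 𝓕, Bf k z * (C₀ * (2:ℝ) ^ (-m) *
        ∫ y in dyadMid p ∩ Set.Icc (z - 1/2) (z + 1/2), Bf k y)) ≤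
        Bf k z * (C₀ * (2:ℝ) ^ (-m) * (6 * K * 2 ^ k)) := by
      intro z
      have hsum : (∑ p ∈ 𝓕, Bf k z * (C₀ * (2:ℝ) ^ (-m) *
          ∫ y in dyadMid p ∩ Set.Icc (z - 1/2) (z + 1/2), Bf k y)) =
          Bf k z * (C₀ * (2:ℝ) ^ (-m)) *
            ∑ p ∈ 𝓕, ∫ y in dyadMid p ∩ Set.Icc (z - 1/2) (z + 1/2), Bf k y := by
        rw [Finset.mul_sum]
        exact Finset.sum_congr rfl (fun p _ => by ring)
      rw [hsum]
      have hle : (∑ p ∈ 𝓕, ∫ y in dyadMid p ∩ Set.Icc (z - 1/2) (z + 1/2), Bf k y) ≤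
          6 * K * 2 ^ k := by
        calc (∑ p ∈ 𝓕, ∫ y in dyadMid p ∩ Set.Icc (z - 1/2) (z + 1/2), Bf k y) ≤
            ∫ y in Set.Icc (z - 1/2) (z + 1/2), Bf k y :=
              inner_sum_le hBk_m hBk_0 hBk_i m 𝓕 h𝓕m z
          _ ≤ 6 * K * 2 ^ k := Bfun_icc_bound hCZ hK 1 hk0 z
      have hpos : (0:ℝ) ≤ Bf k z * (C₀ * (2:ℝ) ^ (-m)) := by
        have := hBk_0 z; positivity
      calc Bf k z * (C₀ * (2:ℝ) ^ (-m)) *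
            ∑ p ∈ 𝓕, ∫ y in dyadMid p ∩ Set.Icc (z - 1/2) (z + 1/2), Bf k y ≤
          Bf k z * (C₀ * (2:ℝ) ^ (-m)) * (6 * K * 2 ^ k) :=
            mul_le_mul_of_nonneg_left hle hpos
        _ = Bf k z * (C₀ * (2:ℝ) ^ (-m) * (6 * K * 2 ^ k)) := by ring
    have hmono : (∫ z, ∑ p ∈ 𝓕, Bf k z * (C₀ * (2:ℝ) ^ (-m) *
        ∫ y in dyadMid p ∩ Set.Icc (z - 1/2) (z + 1/2), Bf k y)) ≤
        ∫ z, Bf k z * (C₀ * (2:ℝ) ^ (-m) * (6 * K * 2 ^ k)) := by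
      apply integral_mono (integrable_finset_sum 𝓕 hint)
        (hBk_i.mul_const (C₀ * (2:ℝ) ^ (-m) * (6 * K * 2 ^ k)))
      intro z
      exact hpoint z
    have hconstmul : (∫ z, Bf k z * (C₀ * (2:ℝ) ^ (-m) * (6 * K * 2 ^ k))) =
        (C₀ * (2:ℝ) ^ (-m) * (6 * K * 2 ^ k)) * ∫ z, Bf k z := by
      rw [integral_mul_const]; ring
    have hcoef : C₀ * (2:ℝ) ^ (-m) * (6 * K * 2 ^ k) = (3/2) * K * C₀ * (2:ℝ) ^ (-s) := by
      have h1 : (2:ℝ) ^ (-m) * 2 ^ k = 2 ^ (-s) * (2:ℝ) ^ (-2 : ℤ) := by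
        rw [← zpow_add₀ (two_ne_zero : (2:ℝ) ≠ 0), ← zpow_add₀ (two_ne_zero : (2:ℝ) ≠ 0)]
        congr 1
        omega
      have h2 : (2:ℝ) ^ (-2 : ℤ) = 1/4 := by norm_num
      calc C₀ * (2:ℝ) ^ (-m) * (6 * K * 2 ^ k) = 6 * K * C₀ * ((2:ℝ) ^ (-m) * 2 ^ k) := by
            ring
        _ = 6 * K * C₀ * (2 ^ (-s) * (1/4)) := by rw [h1, h2]
        _ = (3/2) * K * C₀ * (2:ℝ) ^ (-s) := by ring
    calc (∫ z, ∑ p ∈ 𝓕, Bf k z * (C₀ * (2:ℝ) ^ (-m) *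
          ∫ y in dyadMid p ∩ Set.Icc (z - 1/2) (z + 1/2), Bf k y)) ≤
        ∫ z, Bf k z * (C₀ * (2:ℝ) ^ (-m) * (6 * K * 2 ^ k)) := hmono
      _ = (C₀ * (2:ℝ) ^ (-m) * (6 * K * 2 ^ k)) * ∫ z, Bf k z := hconstmul
      _ = (3/2) * K * C₀ * (2:ℝ) ^ (-s) * ∫ z, Bf k z := by rw [hcoef]
  -- total mass of the bad parts
  have htotal : ∑ m ∈ T, ∫ z, Bf (m - 2 - s) z ≤ (2:ℝ) ^ I0.1 := by
    set T' : Finset ℤ := T.image (fun m => m - 2 - s) with hT'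
    have hinj : ∀ a ∈ T, ∀ b ∈ T, a - 2 - s = b - 2 - s → a = b :=
      fun a _ b _ hab => by omega
    have hreindex : ∑ m ∈ T, ∫ z, Bf (m - 2 - s) z = ∑ k ∈ T', ∫ z, Bf k z :=
      (Finset.sum_image (f := fun k => ∫ z, Bf k z) (g := fun m => m - 2 - s) hinj).symm
    rw [hreindex]
    have hsum_int : ∑ k ∈ T', ∫ z, Bf k z = ∫ z, ∑ k ∈ T', Bf k z :=
      (integral_finset_sum T' (fun k _ => Bfun_integrable hCZ 1 k)).symm
    rw [hsum_int]
    calc (∫ z, ∑ k ∈ T', Bf k z) ≤ ∫ z, f z := by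
          apply integral_mono (integrable_finset_sum T'
            (fun k _ => Bfun_integrable hCZ 1 k)) (cz_f_integrable hCZ)
          intro z
          exact Bfun_sum_le hCZ 1 T' z
      _ = (2:ℝ) ^ I0.1 := cz_integral_f hCZ
  -- put everything together
  have hnn : ∀ m ∈ T, (0:ℝ) ≤ ∫ z, Bf (m - 2 - s) z := by
    intro m _
    exact integral_nonneg (Bfun_nonneg hCZ 1 _)
  calc (∑ p ∈ 𝓝, ∫ x : ℝ,
        ‖TI d ρ p (fun y => ((Bfun 1 𝓑 f (p.1 - 2 - s) y : ℝ) : ℂ)) x‖ ^ 2) ≤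
      ∑ p ∈ 𝓝, ∫ z, Bf (p.1 - 2 - s) z * (C₀ * (2:ℝ) ^ (-p.1) * Inn p z) :=
        Finset.sum_le_sum hXR
    _ = ∑ m ∈ T, ∑ p ∈ 𝓝.filter (fun p => p.1 = m),
        ∫ z, Bf (p.1 - 2 - s) z * (C₀ * (2:ℝ) ^ (-p.1) * Inn p z) := hgroup
    _ ≤ ∑ m ∈ T, (3/2) * K * C₀ * (2:ℝ) ^ (-s) * ∫ z, Bf (m - 2 - s) z :=
        Finset.sum_le_sum hfiber
    _ = (3/2) * K * C₀ * (2:ℝ) ^ (-s) * ∑ m ∈ T, ∫ z, Bf (m - 2 - s) z := by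
        rw [Finset.mul_sum]
    _ ≤ (3/2) * K * C₀ * (2:ℝ) ^ (-s) * (2:ℝ) ^ I0.1 := by
        apply mul_le_mul_of_nonneg_left htotal
        positivity
    _ ≤ 2 * K * C₀ * (2:ℝ) ^ (-s) * (2:ℝ) ^ I0.1 := by
        have h1 : (0:ℝ) < (2:ℝ) ^ (-s) := zpow_pos two_pos _
        have h2 : (0:ℝ) < (2:ℝ) ^ I0.1 := zpow_pos two_pos _
        nlinarith [mul_pos (mul_pos hKpos hC₀) (mul_pos h1 h2)]
end
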